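/- arXiv:2208.06270 — 5 statements merged into one kernel-verified Lean document; each statement's English description precedes it below -/
import Mathlib

section
/- Let P and Q be probability measures on a standard Borel space with P ≪ Q, let γ ∈ (0,1)∪(1,∞), and assume ∫ (dP/dQ)^{γ−1} dP < ∞. Then R_γ(P‖Q) = sup_{f ∈ F} [ (1/(γ−1)) · log ∫ e^{(γ−1) f} dP − (1/γ) · log ∫ e^{γ f} dQ ], where the supremum is taken over the set F of all bounded measurable real-valued functions f; in particular, for every bounded measurable f the right-hand bracketed quantity is at most R_γ(P‖Q). -/
open MeasureTheory Real Filter Topology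

section RenyiAux

variable {Ω : Type*} [MeasurableSpace Ω]

private lemma renyi_smul_eq (P Q : Measure Ω) {γ : ℝ} (hγ0 : 0 < γ) (x : Ω) :
    (P.rnDeriv Q x).toReal • ((P.rnDeriv Q x).toReal ^ (γ - 1))
      = (P.rnDeriv Q x).toReal ^ γ := by
  rcases eq_or_lt_of_le (ENNReal.toReal_nonneg (a := P.rnDeriv Q x)) with h | h
  · rw [smul_eq_mul, ← h, zero_mul, Real.zero_rpow hγ0.ne']
  · rw [smul_eq_mul, Real.rpow_sub h, Real.rpow_one, mul_comm, div_mul_cancel₀ _ h.ne']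

private lemma renyi_intQ (P Q : Measure Ω) [IsProbabilityMeasure P] [IsProbabilityMeasure Q]
    (hPQ : P ≪ Q) {γ : ℝ} (hγ0 : 0 < γ)
    (hint : Integrable (fun x => ((P.rnDeriv Q x).toReal) ^ (γ - 1)) P) :
    Integrable (fun x => ((P.rnDeriv Q x).toReal) ^ γ) Q ∧
      ∫ x, ((P.rnDeriv Q x).toReal) ^ γ ∂Q
        = ∫ x, ((P.rnDeriv Q x).toReal) ^ (γ - 1) ∂P := by
  have hkey : (fun x => (P.rnDeriv Q x).toReal • ((P.rnDeriv Q x).toReal ^ (γ - 1)))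
      = fun x => ((P.rnDeriv Q x).toReal) ^ γ := funext (renyi_smul_eq P Q hγ0)
  constructor
  · have := (MeasureTheory.integrable_rnDeriv_smul_iff hPQ
      (f := fun x => ((P.rnDeriv Q x).toReal) ^ (γ - 1))).mpr hint
    rwa [hkey] at this
  · rw [← MeasureTheory.integral_rnDeriv_smul hPQ
      (f := fun x => ((P.rnDeriv Q x).toReal) ^ (γ - 1)), hkey]

private lemma renyi_g_pos (P Q : Measure Ω) [IsProbabilityMeasure P] [IsProbabilityMeasure Q]
    (hPQ : P ≪ Q) : ∀ᵐ x ∂P, 0 < (P.rnDeriv Q x).toReal := by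
  filter_upwards [Measure.rnDeriv_pos hPQ,
    (Measure.rnDeriv_lt_top P Q).filter_mono hPQ.ae_le] with x h1 h2
  exact ENNReal.toReal_pos h1.ne' h2.ne

private lemma renyi_D_pos (P Q : Measure Ω) [IsProbabilityMeasure P] [IsProbabilityMeasure Q]
    (hPQ : P ≪ Q) {γ : ℝ}
    (hint : Integrable (fun x => ((P.rnDeriv Q x).toReal) ^ (γ - 1)) P) :
    0 < ∫ x, ((P.rnDeriv Q x).toReal) ^ (γ - 1) ∂P := by
  have hpos : ∀ᵐ x ∂P, 0 < ((P.rnDeriv Q x).toReal) ^ (γ - 1) := by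
    filter_upwards [renyi_g_pos P Q hPQ] with x hx
    exact Real.rpow_pos_of_pos hx _
  rw [integral_pos_iff_support_of_nonneg_ae (hpos.mono fun x hx => hx.le) hint]
  have h0 : P (Function.support fun x => ((P.rnDeriv Q x).toReal) ^ (γ - 1))ᶜ = 0 := by
    refine measure_mono_null ?_ (ae_iff.mp hpos)
    intro x hx
    simp only [Set.mem_compl_iff, Function.mem_support, not_not] at hx
    simp [hx]
  by_contra h
  push_neg at h
  have h1 : P (Function.support fun x => ((P.rnDeriv Q x).toReal) ^ (γ - 1)) = 0 :=
    le_antisymm h zero_le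
  have : (1 : ENNReal) ≤ 0 := by
    calc (1 : ENNReal) = P Set.univ := (measure_univ).symm
    _ ≤ P (Function.support fun x => ((P.rnDeriv Q x).toReal) ^ (γ - 1))
        + P (Function.support fun x => ((P.rnDeriv Q x).toReal) ^ (γ - 1))ᶜ := by
        rw [← Set.union_compl_self
          (Function.support fun x => ((P.rnDeriv Q x).toReal) ^ (γ - 1))]
        exact measure_union_le _ _
    _ = 0 := by rw [h0, h1, add_zero]
  simp at this

private lemma renyi_exp_int (μ : Measure Ω) [IsProbabilityMeasure μ] {f : Ω → ℝ}
    (hf : Measurable f) (c C : ℝ) (hC : ∀ x, |f x| ≤ C) :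
    Integrable (fun x => Real.exp (c * f x)) μ ∧ 0 < ∫ x, Real.exp (c * f x) ∂μ := by
  have hub : ∀ x, Real.exp (c * f x) ≤ Real.exp (|c| * C) := fun x =>
    Real.exp_le_exp.mpr (le_trans (le_abs_self _)
      (by rw [abs_mul]; exact mul_le_mul_of_nonneg_left (hC x) (abs_nonneg c)))
  have hlb : ∀ x, Real.exp (-(|c| * C)) ≤ Real.exp (c * f x) := fun x => by
    refine Real.exp_le_exp.mpr ?_
    have : |c * f x| ≤ |c| * C := by
      rw [abs_mul]; exact mul_le_mul_of_nonneg_left (hC x) (abs_nonneg c)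
    linarith [neg_abs_le (c * f x)]
  have hintg : Integrable (fun x => Real.exp (c * f x)) μ := by
    refine ⟨((hf.const_mul c).exp).aestronglyMeasurable, ?_⟩
    refine HasFiniteIntegral.of_bounded (C := Real.exp (|c| * C)) ?_
    exact Eventually.of_forall fun x => by
      rw [Real.norm_eq_abs, abs_of_pos (Real.exp_pos _)]; exact hub x
  refine ⟨hintg, ?_⟩
  calc (0:ℝ) < Real.exp (-(|c| * C)) := Real.exp_pos _
  _ = ∫ _, Real.exp (-(|c| * C)) ∂μ := by simp
  _ ≤ ∫ x, Real.exp (c * f x) ∂μ := integral_mono (integrable_const _) hintg hlb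

private lemma renyi_memℒp_of_integrable_rpow {μ : Measure Ω} {h : Ω → ℝ}
    (hm : AEStronglyMeasurable h μ) (hnn : ∀ x, 0 ≤ h x) {s : ℝ} (hs : 0 < s)
    (hint : Integrable (fun x => h x ^ s) μ) : MemLp h (ENNReal.ofReal s) μ := by
  have hq0 : ENNReal.ofReal s ≠ 0 := by
    simp only [ne_eq, ENNReal.ofReal_eq_zero, not_le]; exact hs
  have hqt : ENNReal.ofReal s ≠ ⊤ := ENNReal.ofReal_ne_top
  refine (memLp_norm_rpow_iff (q := ENNReal.ofReal s) hm hq0 hqt).mp ?_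
  rw [ENNReal.div_self hq0 hqt, ENNReal.toReal_ofReal hs.le]
  refine memLp_one_iff_integrable.mpr (hint.congr ?_)
  exact Eventually.of_forall fun x => by
    simp only [Real.norm_eq_abs, abs_of_nonneg (hnn x)]

private lemma renyi_memℒp_of_bound {μ : Measure Ω} [IsFiniteMeasure μ] {h : Ω → ℝ}
    (hm : AEStronglyMeasurable h μ) (B : ℝ) (hb : ∀ x, |h x| ≤ B) (p : ENNReal) :
    MemLp h p μ :=
  MemLp.of_bound hm B (Eventually.of_forall fun x => by rw [Real.norm_eq_abs]; exact hb x)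

private lemma renyi_exp_abs_bound (c C : ℝ) (f : Ω → ℝ) (hC : ∀ x, |f x| ≤ C) (x : Ω) :
    |Real.exp (c * f x)| ≤ Real.exp (|c| * C) := by
  rw [abs_of_pos (Real.exp_pos _)]
  refine Real.exp_le_exp.mpr (le_trans (le_abs_self _) ?_)
  rw [abs_mul]
  exact mul_le_mul_of_nonneg_left (hC x) (abs_nonneg c)

private lemma renyi_E1 (P Q : Measure Ω) [IsProbabilityMeasure P] [IsProbabilityMeasure Q]
    (hPQ : P ≪ Q) (h : Ω → ℝ) :
    ∫ x, h x * (P.rnDeriv Q x).toReal ∂Q = ∫ x, h x ∂P := by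
  rw [← MeasureTheory.integral_rnDeriv_smul hPQ (f := h)]
  congr 1
  funext x
  rw [smul_eq_mul, mul_comm]

private lemma renyi_upper (P Q : Measure Ω) [IsProbabilityMeasure P] [IsProbabilityMeasure Q]
    (hPQ : P ≪ Q) {γ : ℝ} (hγ0 : 0 < γ) (hγ1 : γ ≠ 1)
    (hint : Integrable (fun x => ((P.rnDeriv Q x).toReal) ^ (γ - 1)) P)
    {f : Ω → ℝ} (hf : Measurable f) {C : ℝ} (hC : ∀ x, |f x| ≤ C) :
    (1 / (γ - 1)) * Real.log (∫ x, Real.exp ((γ - 1) * f x) ∂P)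
      - (1 / γ) * Real.log (∫ x, Real.exp (γ * f x) ∂Q)
    ≤ (1 / (γ * (γ - 1))) * Real.log (∫ x, ((P.rnDeriv Q x).toReal) ^ (γ - 1) ∂P) := by
  have hgm : Measurable fun x => (P.rnDeriv Q x).toReal :=
    (Measure.measurable_rnDeriv P Q).ennreal_toReal
  have hγ1' : γ - 1 ≠ 0 := sub_ne_zero.mpr hγ1
  obtain ⟨hIgQ, hDeq⟩ := renyi_intQ P Q hPQ hγ0 hint
  have hD : 0 < ∫ x, ((P.rnDeriv Q x).toReal) ^ (γ - 1) ∂P := renyi_D_pos P Q hPQ hint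
  obtain ⟨hAint, hApos⟩ := renyi_exp_int P hf (γ - 1) C hC
  obtain ⟨hBint, hBpos⟩ := renyi_exp_int Q hf γ C hC
  have e1 : ∫ x, Real.exp ((γ - 1) * f x) * (P.rnDeriv Q x).toReal ∂Q
      = ∫ x, Real.exp ((γ - 1) * f x) ∂P := renyi_E1 P Q hPQ _
  rcases lt_or_gt_of_ne hγ1 with h1 | h1
  · -- γ < 1
    have hs1 : (0:ℝ) < 1 - γ := by linarith
    have hpq : Real.HolderConjugate (1/γ) (1/(1-γ)) := by
      rw [Real.holderConjugate_iff]; constructor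
      · rw [lt_div_iff₀ hγ0]; linarith
      · simp only [one_div, inv_inv]; ring
    set u := fun x => Real.exp (γ * (γ - 1) * f x) * (P.rnDeriv Q x).toReal ^ γ with hu
    set v := fun x => Real.exp (γ * (1 - γ) * f x) with hv
    have huv : ∀ x, u x * v x = (P.rnDeriv Q x).toReal ^ γ := by
      intro x
      simp only [hu, hv]
      rw [mul_comm (Real.exp (γ * (γ - 1) * f x)) ((P.rnDeriv Q x).toReal ^ γ), mul_assoc,
        ← Real.exp_add, show γ * (γ - 1) * f x + γ * (1 - γ) * f x = 0 by ring,
        Real.exp_zero, mul_one]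
    have hu_pow : ∀ x, u x ^ (1/γ) = Real.exp ((γ - 1) * f x) * (P.rnDeriv Q x).toReal := by
      intro x
      simp only [hu]
      rw [Real.mul_rpow (Real.exp_pos _).le (Real.rpow_nonneg ENNReal.toReal_nonneg _),
        ← Real.exp_mul, ← Real.rpow_mul ENNReal.toReal_nonneg,
        mul_one_div_cancel hγ0.ne', Real.rpow_one]
      congr 2
      field_simp
    have hv_pow : ∀ x, v x ^ (1/(1-γ)) = Real.exp (γ * f x) := by
      intro x
      simp only [hv]
      rw [← Real.exp_mul]
      congr 1
      field_simp
    have hum : Measurable u := by fun_prop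
    have hvm : Measurable v := by fun_prop
    have hIu : Integrable (fun x => u x ^ (1/γ)) Q := by
      have h0 := (MeasureTheory.integrable_rnDeriv_smul_iff hPQ
        (f := fun x => Real.exp ((γ - 1) * f x))).mpr hAint
      refine h0.congr (Eventually.of_forall fun x => ?_)
      simp only
      rw [hu_pow x, smul_eq_mul, mul_comm]
    have hMu : MemLp u (ENNReal.ofReal (1/γ)) Q :=
      renyi_memℒp_of_integrable_rpow hum.aestronglyMeasurable
        (fun x => mul_nonneg (Real.exp_pos _).le (Real.rpow_nonneg ENNReal.toReal_nonneg _))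
        (by positivity) hIu
    have hMv : MemLp v (ENNReal.ofReal (1/(1-γ))) Q :=
      renyi_memℒp_of_bound hvm.aestronglyMeasurable (Real.exp (|γ * (1 - γ)| * C))
        (renyi_exp_abs_bound _ C f hC) _
    have holder : ∫ a, u a * v a ∂Q ≤ (∫ a, u a ^ (1/γ) ∂Q) ^ (1 / (1/γ))
        * (∫ a, v a ^ (1/(1-γ)) ∂Q) ^ (1 / (1/(1-γ))) :=
      integral_mul_le_Lp_mul_Lq_of_nonneg (μ := Q) hpq
      (Eventually.of_forall fun x =>
        mul_nonneg (Real.exp_pos _).le (Real.rpow_nonneg ENNReal.toReal_nonneg _))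
      (Eventually.of_forall fun x => (Real.exp_pos _).le) hMu hMv
    simp only [huv, hu_pow, hv_pow, one_div_one_div] at holder
    rw [e1, hDeq] at holder
    have hlog : Real.log (∫ x, ((P.rnDeriv Q x).toReal) ^ (γ - 1) ∂P)
        ≤ γ * Real.log (∫ x, Real.exp ((γ - 1) * f x) ∂P)
          + (1 - γ) * Real.log (∫ x, Real.exp (γ * f x) ∂Q) := by
      have hr : (0:ℝ) < (∫ x, Real.exp ((γ - 1) * f x) ∂P) ^ γ
          * (∫ x, Real.exp (γ * f x) ∂Q) ^ (1 - γ) :=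
        mul_pos (Real.rpow_pos_of_pos hApos _) (Real.rpow_pos_of_pos hBpos _)
      calc Real.log (∫ x, ((P.rnDeriv Q x).toReal) ^ (γ - 1) ∂P)
          ≤ Real.log ((∫ x, Real.exp ((γ - 1) * f x) ∂P) ^ γ
            * (∫ x, Real.exp (γ * f x) ∂Q) ^ (1 - γ)) :=
            (Real.log_le_log_iff hD hr).mpr holder
        _ = _ := by
            rw [Real.log_mul (ne_of_gt (Real.rpow_pos_of_pos hApos _))
              (ne_of_gt (Real.rpow_pos_of_pos hBpos _)),
              Real.log_rpow hApos, Real.log_rpow hBpos]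
    have hneg : 1 / (γ * (γ - 1)) < 0 :=
      one_div_neg.mpr (mul_neg_of_pos_of_neg hγ0 (by linarith))
    have h2 := mul_le_mul_of_nonpos_left hlog hneg.le
    have e2 : 1 / (γ * (γ - 1)) * (γ * Real.log (∫ x, Real.exp ((γ - 1) * f x) ∂P)
          + (1 - γ) * Real.log (∫ x, Real.exp (γ * f x) ∂Q))
        = (1 / (γ - 1)) * Real.log (∫ x, Real.exp ((γ - 1) * f x) ∂P)
          - (1 / γ) * Real.log (∫ x, Real.exp (γ * f x) ∂Q) := by
      field_simp
      ring
    linarith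
  · -- 1 < γ
    have hs1 : (0:ℝ) < γ - 1 := by linarith
    have hpq : Real.HolderConjugate (γ/(γ-1)) γ := by
      rw [Real.holderConjugate_iff]; constructor
      · exact (one_lt_div hs1).mpr (by linarith)
      · rw [inv_div]
        field_simp
        ring
    have hMf : MemLp (fun x => Real.exp ((γ - 1) * f x)) (ENNReal.ofReal (γ/(γ-1))) Q :=
      renyi_memℒp_of_bound ((hf.const_mul _).exp).aestronglyMeasurable
        (Real.exp (|γ - 1| * C)) (renyi_exp_abs_bound _ C f hC) _
    have hMg : MemLp (fun x => (P.rnDeriv Q x).toReal) (ENNReal.ofReal γ) Q :=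
      renyi_memℒp_of_integrable_rpow hgm.aestronglyMeasurable
        (fun x => ENNReal.toReal_nonneg) hγ0 hIgQ
    have holder := integral_mul_le_Lp_mul_Lq_of_nonneg (μ := Q) hpq
      (Eventually.of_forall fun x => (Real.exp_pos _).le)
      (Eventually.of_forall fun x => ENNReal.toReal_nonneg) hMf hMg
    have hpow : ∀ a : Ω, Real.exp ((γ - 1) * f a) ^ (γ/(γ-1)) = Real.exp (γ * f a) := by
      intro a
      rw [← Real.exp_mul]
      congr 1
      field_simp
    simp only [hpow, one_div_div] at holder
    rw [e1, hDeq] at holder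
    have hlog : Real.log (∫ x, Real.exp ((γ - 1) * f x) ∂P)
        ≤ (γ - 1) / γ * Real.log (∫ x, Real.exp (γ * f x) ∂Q)
          + 1 / γ * Real.log (∫ x, ((P.rnDeriv Q x).toReal) ^ (γ - 1) ∂P) := by
      have hr : (0:ℝ) < (∫ x, Real.exp (γ * f x) ∂Q) ^ ((γ - 1) / γ)
          * (∫ x, ((P.rnDeriv Q x).toReal) ^ (γ - 1) ∂P) ^ (1 / γ) :=
        mul_pos (Real.rpow_pos_of_pos hBpos _) (Real.rpow_pos_of_pos hD _)
      calc Real.log (∫ x, Real.exp ((γ - 1) * f x) ∂P)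
          ≤ Real.log ((∫ x, Real.exp (γ * f x) ∂Q) ^ ((γ - 1) / γ)
            * (∫ x, ((P.rnDeriv Q x).toReal) ^ (γ - 1) ∂P) ^ (1 / γ)) :=
            (Real.log_le_log_iff hApos hr).mpr holder
        _ = _ := by
            rw [Real.log_mul (ne_of_gt (Real.rpow_pos_of_pos hBpos _))
              (ne_of_gt (Real.rpow_pos_of_pos hD _)),
              Real.log_rpow hBpos, Real.log_rpow hD]
    have hposc : (0:ℝ) < 1 / (γ - 1) := one_div_pos.mpr hs1
    have h2 := mul_le_mul_of_nonneg_left hlog hposc.le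
    have e2 : 1 / (γ - 1) * ((γ - 1) / γ * Real.log (∫ x, Real.exp (γ * f x) ∂Q)
          + 1 / γ * Real.log (∫ x, ((P.rnDeriv Q x).toReal) ^ (γ - 1) ∂P))
        = (1 / γ) * Real.log (∫ x, Real.exp (γ * f x) ∂Q)
          + (1 / (γ * (γ - 1))) * Real.log (∫ x, ((P.rnDeriv Q x).toReal) ^ (γ - 1) ∂P) := by
      field_simp
    linarith

/-! ### The truncation sequence -/

noncomputable def renyiClamp (t : ℝ) (n : ℕ) : ℝ :=
  min (max t (Real.exp (-(n:ℝ)))) (Real.exp (n:ℝ))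

lemma renyiClamp_pos (t : ℝ) (n : ℕ) : 0 < renyiClamp t n :=
  lt_min (lt_of_lt_of_le (Real.exp_pos _) (le_max_right _ _)) (Real.exp_pos _)

lemma renyiClamp_lb (t : ℝ) (n : ℕ) : Real.exp (-(n:ℝ)) ≤ renyiClamp t n :=
  le_min (le_max_right _ _) (Real.exp_le_exp.mpr (by
    have : (0:ℝ) ≤ (n:ℝ) := Nat.cast_nonneg n
    linarith))

lemma renyiClamp_ub (t : ℝ) (n : ℕ) : renyiClamp t n ≤ Real.exp (n:ℝ) :=
  min_le_right _ _

lemma renyiClamp_le (t : ℝ) (n : ℕ) : renyiClamp t n ≤ max t 1 := by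
  refine le_trans (min_le_left _ _) (max_le_max le_rfl ?_)
  calc Real.exp (-(n:ℝ)) ≤ Real.exp 0 :=
        Real.exp_le_exp.mpr (neg_nonpos.mpr (Nat.cast_nonneg n))
  _ = 1 := Real.exp_zero

lemma renyiClamp_ge (t : ℝ) (n : ℕ) : min t 1 ≤ renyiClamp t n := by
  refine le_min (le_trans (min_le_left _ _) (le_max_left _ _)) ?_
  calc min t 1 ≤ 1 := min_le_right _ _
  _ = Real.exp 0 := Real.exp_zero.symm
  _ ≤ Real.exp (n:ℝ) := Real.exp_le_exp.mpr (Nat.cast_nonneg n)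

lemma renyiClamp_log_abs_le (t : ℝ) (n : ℕ) : |Real.log (renyiClamp t n)| ≤ (n:ℝ) := by
  rw [abs_le]
  constructor
  · have := (Real.log_le_log_iff (Real.exp_pos _) (renyiClamp_pos t n)).mpr (renyiClamp_lb t n)
    rwa [Real.log_exp] at this
  · have := (Real.log_le_log_iff (renyiClamp_pos t n) (Real.exp_pos _)).mpr (renyiClamp_ub t n)
    rwa [Real.log_exp] at this

lemma renyiClamp_exp_eq (t : ℝ) (n : ℕ) (s : ℝ) :
    Real.exp (s * Real.log (renyiClamp t n)) = renyiClamp t n ^ s := by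
  rw [Real.rpow_def_of_pos (renyiClamp_pos t n), mul_comm]

lemma renyiClamp_measurable {g : Ω → ℝ} (hgm : Measurable g) (n : ℕ) :
    Measurable fun x => renyiClamp (g x) n := by
  unfold renyiClamp
  fun_prop

lemma renyiClamp_eq {t : ℝ} (ht : 0 < t) {n : ℕ} (hn : |Real.log t| ≤ (n:ℝ)) :
    renyiClamp t n = t := by
  have h1 : Real.exp (-(n:ℝ)) ≤ t := by
    rw [← Real.exp_log ht]
    exact Real.exp_le_exp.mpr (by linarith [neg_abs_le (Real.log t)])
  have h2 : t ≤ Real.exp (n:ℝ) := by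
    rw [← Real.exp_log ht]
    exact Real.exp_le_exp.mpr (le_trans (le_abs_self _) hn)
  unfold renyiClamp
  rw [max_eq_left h1, min_eq_left h2]

lemma renyiClamp_tendsto_rpow {t : ℝ} (ht : 0 < t) (s : ℝ) :
    Tendsto (fun n : ℕ => renyiClamp t n ^ s) atTop (𝓝 (t ^ s)) := by
  obtain ⟨N, hN⟩ := exists_nat_ge |Real.log t|
  refine tendsto_atTop_of_eventually_const (i₀ := N) fun n hn => ?_
  rw [renyiClamp_eq ht (le_trans hN (Nat.cast_le.mpr hn))]

lemma renyiClamp_tendsto_rpow_zero {s : ℝ} (hs : 0 < s) :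
    Tendsto (fun n : ℕ => renyiClamp 0 n ^ s) atTop (𝓝 ((0:ℝ) ^ s)) := by
  have h : ∀ n : ℕ, renyiClamp 0 n ^ s = Real.exp (-(n:ℝ) * s) := by
    intro n
    unfold renyiClamp
    rw [max_eq_right (Real.exp_pos _).le,
      min_eq_left (Real.exp_le_exp.mpr (by
        have : (0:ℝ) ≤ (n:ℝ) := Nat.cast_nonneg n
        linarith)), ← Real.exp_mul]
  simp only [h, Real.zero_rpow hs.ne']
  refine Real.tendsto_exp_atBot.comp ?_
  have h1 : Tendsto (fun n : ℕ => (n:ℝ) * s) atTop atTop :=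
    (tendsto_natCast_atTop_atTop (R := ℝ)).atTop_mul_const hs
  have h2 := tendsto_neg_atTop_atBot.comp h1
  refine h2.congr fun n => ?_
  simp [neg_mul]

lemma renyi_rpow_sandwich {t cv : ℝ} (ht : 0 < t) (hlb : min t 1 ≤ cv) (hub : cv ≤ max t 1)
    (s : ℝ) : cv ^ s ≤ t ^ s + 1 := by
  have hmin : (0:ℝ) < min t 1 := lt_min ht one_pos
  have hcv : (0:ℝ) < cv := lt_of_lt_of_le hmin hlb
  rcases le_or_gt 0 s with hs | hs
  · calc cv ^ s ≤ (max t 1) ^ s := Real.rpow_le_rpow hcv.le hub hs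
    _ ≤ t ^ s + 1 := by
        rcases le_total t 1 with h | h
        · rw [max_eq_right h, Real.one_rpow]
          have := Real.rpow_nonneg ht.le s
          linarith
        · rw [max_eq_left h]
          linarith
  · calc cv ^ s ≤ (min t 1) ^ s := Real.rpow_le_rpow_of_nonpos hmin hlb hs.le
    _ ≤ t ^ s + 1 := by
        rcases le_total t 1 with h | h
        · rw [min_eq_left h]
          linarith
        · rw [min_eq_right h, Real.one_rpow]
          have := Real.rpow_nonneg ht.le s
          linarith

lemma renyi_rpow_ub {t cv s : ℝ} (ht : 0 ≤ t) (hcv : 0 ≤ cv) (hub : cv ≤ max t 1)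
    (hs : 0 ≤ s) : cv ^ s ≤ t ^ s + 1 := by
  calc cv ^ s ≤ (max t 1) ^ s := Real.rpow_le_rpow hcv hub hs
  _ ≤ t ^ s + 1 := by
      rcases le_total t 1 with h | h
      · rw [max_eq_right h, Real.one_rpow]
        have := Real.rpow_nonneg ht s
        linarith
      · rw [max_eq_left h]
        linarith

lemma renyiClamp_tendsto_integral {μ : Measure Ω} [IsProbabilityMeasure μ] {g : Ω → ℝ}
    (hgm : Measurable g) {s : ℝ}
    (hint : Integrable (fun x => g x ^ s) μ)
    (hbd : ∀ᵐ x ∂μ, ∀ n : ℕ, renyiClamp (g x) n ^ s ≤ g x ^ s + 1)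
    (hlim : ∀ᵐ x ∂μ, Tendsto (fun n : ℕ => renyiClamp (g x) n ^ s) atTop (𝓝 (g x ^ s))) :
    Tendsto (fun n : ℕ => ∫ x, renyiClamp (g x) n ^ s ∂μ) atTop
      (𝓝 (∫ x, g x ^ s ∂μ)) := by
  refine tendsto_integral_of_dominated_convergence (fun x => g x ^ s + 1) ?_
    (hint.add (integrable_const 1)) ?_ hlim
  · intro n
    have : Measurable fun x => renyiClamp (g x) n ^ s :=
      (renyiClamp_measurable hgm n).pow measurable_const
    exact this.aestronglyMeasurable
  · intro n
    filter_upwards [hbd] with x hx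
    rw [Real.norm_eq_abs, abs_of_nonneg (Real.rpow_nonneg (renyiClamp_pos _ _).le _)]
    exact hx n

end RenyiAux

/-- **Variational representation of Rényi divergence** (Lemma 1, Birrell et al.).
For probability measures `P ≪ Q` on a standard Borel space and order
`γ ∈ (0,1) ∪ (1,∞)` with `∫ (dP/dQ)^(γ-1) dP < ∞`, the Rényi divergence
`R_γ(P‖Q) = (1/(γ(γ-1))) log ∫ (dP/dQ)^(γ-1) dP` is the least upper bound of
`(1/(γ-1)) log ∫ e^((γ-1)f) dP - (1/γ) log ∫ e^(γf) dQ` over all bounded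
measurable functions `f`; in particular every such `f` gives a lower bound. -/
theorem renyi_variational_formula
    {Ω : Type*} [MeasurableSpace Ω] [StandardBorelSpace Ω]
    (P Q : Measure Ω) [IsProbabilityMeasure P] [IsProbabilityMeasure Q]
    (hPQ : P ≪ Q) (γ : ℝ) (hγ : γ ∈ Set.Ioo (0 : ℝ) 1 ∪ Set.Ioi (1 : ℝ))
    (hint : Integrable (fun x => ((P.rnDeriv Q x).toReal) ^ (γ - 1)) P) :
    IsLUB
      {r : ℝ | ∃ f : Ω → ℝ, Measurable f ∧ (∃ C : ℝ, ∀ x, |f x| ≤ C) ∧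
        r = (1 / (γ - 1)) * Real.log (∫ x, Real.exp ((γ - 1) * f x) ∂P)
          - (1 / γ) * Real.log (∫ x, Real.exp (γ * f x) ∂Q)}
      ((1 / (γ * (γ - 1))) *
        Real.log (∫ x, ((P.rnDeriv Q x).toReal) ^ (γ - 1) ∂P)) := by
  have hγ0 : 0 < γ := by
    rcases hγ with h | h
    · exact h.1
    · exact lt_trans one_pos h
  have hγ1 : γ ≠ 1 := by
    rcases hγ with h | h
    · exact ne_of_lt h.2
    · exact ne_of_gt h
  have hγ1' : γ - 1 ≠ 0 := sub_ne_zero.mpr hγ1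
  have hgm : Measurable fun x => (P.rnDeriv Q x).toReal :=
    (Measure.measurable_rnDeriv P Q).ennreal_toReal
  obtain ⟨hIgQ, hDeq⟩ := renyi_intQ P Q hPQ hγ0 hint
  have hD : 0 < ∫ x, ((P.rnDeriv Q x).toReal) ^ (γ - 1) ∂P := renyi_D_pos P Q hPQ hint
  -- membership of the truncated sequence values
  have hmem : ∀ n : ℕ,
      ((1 / (γ - 1)) * Real.log (∫ x, renyiClamp ((P.rnDeriv Q x).toReal) n ^ (γ - 1) ∂P)
        - (1 / γ) * Real.log (∫ x, renyiClamp ((P.rnDeriv Q x).toReal) n ^ γ ∂Q))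
      ∈ {r : ℝ | ∃ f : Ω → ℝ, Measurable f ∧ (∃ C : ℝ, ∀ x, |f x| ≤ C) ∧
        r = (1 / (γ - 1)) * Real.log (∫ x, Real.exp ((γ - 1) * f x) ∂P)
          - (1 / γ) * Real.log (∫ x, Real.exp (γ * f x) ∂Q)} := by
    intro n
    refine ⟨fun x => Real.log (renyiClamp ((P.rnDeriv Q x).toReal) n),
      (renyiClamp_measurable hgm n).log,
      ⟨(n:ℝ), fun x => renyiClamp_log_abs_le _ n⟩, ?_⟩
    have e1 : ∫ x, Real.exp ((γ - 1) * Real.log (renyiClamp ((P.rnDeriv Q x).toReal) n)) ∂P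
        = ∫ x, renyiClamp ((P.rnDeriv Q x).toReal) n ^ (γ - 1) ∂P :=
      integral_congr_ae (Eventually.of_forall fun x => renyiClamp_exp_eq _ n _)
    have e2 : ∫ x, Real.exp (γ * Real.log (renyiClamp ((P.rnDeriv Q x).toReal) n)) ∂Q
        = ∫ x, renyiClamp ((P.rnDeriv Q x).toReal) n ^ γ ∂Q :=
      integral_congr_ae (Eventually.of_forall fun x => renyiClamp_exp_eq _ n _)
    rw [e1, e2]
  -- convergence of the two integral sequences
  have hT1 : Tendsto (fun n : ℕ => ∫ x, renyiClamp ((P.rnDeriv Q x).toReal) n ^ (γ - 1) ∂P)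
      atTop (𝓝 (∫ x, ((P.rnDeriv Q x).toReal) ^ (γ - 1) ∂P)) := by
    refine renyiClamp_tendsto_integral hgm hint ?_ ?_
    · filter_upwards [renyi_g_pos P Q hPQ] with x hx
      intro n
      exact renyi_rpow_sandwich hx (renyiClamp_ge _ _) (renyiClamp_le _ _) _
    · filter_upwards [renyi_g_pos P Q hPQ] with x hx
      exact renyiClamp_tendsto_rpow hx _
  have hT2 : Tendsto (fun n : ℕ => ∫ x, renyiClamp ((P.rnDeriv Q x).toReal) n ^ γ ∂Q)
      atTop (𝓝 (∫ x, ((P.rnDeriv Q x).toReal) ^ γ ∂Q)) := by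
    refine renyiClamp_tendsto_integral hgm hIgQ ?_ ?_
    · exact Eventually.of_forall fun x n =>
        renyi_rpow_ub ENNReal.toReal_nonneg (renyiClamp_pos _ _).le (renyiClamp_le _ _) hγ0.le
    · refine Eventually.of_forall fun x => ?_
      rcases eq_or_lt_of_le (ENNReal.toReal_nonneg (a := P.rnDeriv Q x)) with h | h
      · rw [← h]
        exact renyiClamp_tendsto_rpow_zero hγ0
      · exact renyiClamp_tendsto_rpow h _
  rw [hDeq] at hT2
  have hlogcont := (Real.continuousAt_log hD.ne').tendsto
  have hTV : Tendsto (fun n : ℕ =>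
      (1 / (γ - 1)) * Real.log (∫ x, renyiClamp ((P.rnDeriv Q x).toReal) n ^ (γ - 1) ∂P)
        - (1 / γ) * Real.log (∫ x, renyiClamp ((P.rnDeriv Q x).toReal) n ^ γ ∂Q)) atTop
      (𝓝 ((1 / (γ - 1)) * Real.log (∫ x, ((P.rnDeriv Q x).toReal) ^ (γ - 1) ∂P)
        - (1 / γ) * Real.log (∫ x, ((P.rnDeriv Q x).toReal) ^ (γ - 1) ∂P))) := by
    exact ((hlogcont.comp hT1).const_mul _).sub ((hlogcont.comp hT2).const_mul _)
  have hval : (1 / (γ - 1)) * Real.log (∫ x, ((P.rnDeriv Q x).toReal) ^ (γ - 1) ∂P)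
        - (1 / γ) * Real.log (∫ x, ((P.rnDeriv Q x).toReal) ^ (γ - 1) ∂P)
      = (1 / (γ * (γ - 1))) * Real.log (∫ x, ((P.rnDeriv Q x).toReal) ^ (γ - 1) ∂P) := by
    rw [← sub_mul]
    congr 1
    field_simp
    ring
  constructor
  · rintro r ⟨f, hfm, ⟨C, hC⟩, rfl⟩
    exact renyi_upper P Q hPQ hγ0 hγ1 hint hfm hC
  · intro b hb
    rw [← hval]
    exact le_of_tendsto hTV (Eventually.of_forall fun n => hb (hmem n))
end

section
/- Let P and Q be probability measures on a standard Borel space, α ∈ (0,1), and γ ∈ (0,1)∪(1,∞). Then R_γ(P ‖ αP + (1−α)Q) = sup_{f ∈ F} [ (1/(γ−1)) · log ∫ e^{(γ−1) f} dP − (1/γ) · log( α ∫ e^{γ f} dP + (1−α) ∫ e^{γ f} dQ ) ], where the supremum is over the set F of all bounded measurable real-valued functions f, and for every such f the bracketed quantity is at most R_γ(P ‖ αP + (1−α)Q). -/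
open MeasureTheory Real Filter
open scoped ENNReal NNReal Topology

private lemma ennreal_rpow_ne_top {x : ℝ≥0∞} (h0 : x ≠ 0) (ht : x ≠ ⊤) (y : ℝ) :
    x ^ y ≠ ⊤ := by
  rcases le_or_gt 0 y with hy | hy
  · exact ENNReal.rpow_ne_top_of_nonneg hy ht
  · rw [show y = -(-y) by ring, ENNReal.rpow_neg, ne_eq, ENNReal.inv_eq_top]
    simp only [ENNReal.rpow_eq_zero_iff, not_or, not_and]
    exact ⟨fun h => absurd h h0, fun h => absurd h ht⟩

private lemma lint_exp_bounds {Ω : Type*} [MeasurableSpace Ω] (μ : Measure Ω)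
    [IsProbabilityMeasure μ] {f : Ω → ℝ} (c C : ℝ) (hC : ∀ x, |f x| ≤ C) :
    0 < ∫⁻ x, ENNReal.ofReal (Real.exp (c * f x)) ∂μ ∧
      ∫⁻ x, ENNReal.ofReal (Real.exp (c * f x)) ∂μ ≠ ⊤ := by
  have hbd : ∀ x, |c * f x| ≤ |c| * C := fun x => by
    rw [abs_mul]; exact mul_le_mul_of_nonneg_left (hC x) (abs_nonneg c)
  constructor
  · calc (0 : ℝ≥0∞) < ENNReal.ofReal (Real.exp (-(|c| * C))) := by
          simp [ENNReal.ofReal_pos, Real.exp_pos]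
      _ = ∫⁻ _x, ENNReal.ofReal (Real.exp (-(|c| * C))) ∂μ := by simp
      _ ≤ _ := lintegral_mono fun x => ENNReal.ofReal_le_ofReal <| Real.exp_le_exp.2 <|
          le_trans (neg_le_neg (hbd x)) (neg_abs_le _)
  · refine ne_top_of_le_ne_top (b := ENNReal.ofReal (Real.exp (|c| * C)))
      ENNReal.ofReal_ne_top ?_
    calc ∫⁻ x, ENNReal.ofReal (Real.exp (c * f x)) ∂μ
        ≤ ∫⁻ _x, ENNReal.ofReal (Real.exp (|c| * C)) ∂μ :=
          lintegral_mono fun x => ENNReal.ofReal_le_ofReal <| Real.exp_le_exp.2 <|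
            le_trans (le_abs_self _) (hbd x)
      _ = ENNReal.ofReal (Real.exp (|c| * C)) := by simp

/-- The `α`-skew mixture `αP + (1-α)Q` of two measures. -/
noncomputable def mixture {Ω : Type*} [MeasurableSpace Ω] (α : ℝ) (P Q : Measure Ω) :
    Measure Ω :=
  ENNReal.ofReal α • P + ENNReal.ofReal (1 - α) • Q

/-- **Variational representation of the skew Rényi divergence.**
For probability measures `P, Q` on a standard Borel space, `α ∈ (0,1)` and
`γ ∈ (0,1) ∪ (1,∞)`, the skew Rényi divergence
`R_γ(P ‖ αP + (1-α)Q) = (1/(γ(γ-1))) log ∫ (dP/d(αP+(1-α)Q))^(γ-1) dP`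
is the least upper bound of
`(1/(γ-1)) log ∫ e^((γ-1)f) dP - (1/γ) log (α ∫ e^(γf) dP + (1-α) ∫ e^(γf) dQ)`
over all bounded measurable `f`; in particular every such `f` gives a lower bound. -/
theorem skew_renyi_variational_formula
    {Ω : Type*} [MeasurableSpace Ω] [StandardBorelSpace Ω]
    (P Q : Measure Ω) [IsProbabilityMeasure P] [IsProbabilityMeasure Q]
    (α : ℝ) (hα : α ∈ Set.Ioo (0 : ℝ) 1)
    (γ : ℝ) (hγ : γ ∈ Set.Ioo (0 : ℝ) 1 ∪ Set.Ioi (1 : ℝ)) :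
    IsLUB
      {r : ℝ | ∃ f : Ω → ℝ, Measurable f ∧ (∃ C : ℝ, ∀ x, |f x| ≤ C) ∧
        r = (1 / (γ - 1)) * Real.log (∫ x, Real.exp ((γ - 1) * f x) ∂P)
          - (1 / γ) * Real.log (α * ∫ x, Real.exp (γ * f x) ∂P
              + (1 - α) * ∫ x, Real.exp (γ * f x) ∂Q)}
      ((1 / (γ * (γ - 1))) *
        Real.log (∫ x, ((P.rnDeriv (mixture α P Q) x).toReal) ^ (γ - 1) ∂P)) := by
  obtain ⟨hα0, hα1⟩ := hα
  have h1α : 0 < 1 - α := by linarith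
  have hγ0 : 0 < γ := by rcases hγ with h | h; exacts [h.1, lt_trans one_pos h]
  have hγ0' : γ ≠ 0 := ne_of_gt hγ0
  have hγ1 : γ ≠ 1 := by
    rcases hγ with h | h; exacts [ne_of_lt h.2, ne_of_gt h]
  have hγ1' : γ - 1 ≠ 0 := sub_ne_zero.2 hγ1
  set M : Measure Ω := mixture α P Q with hMdef
  have hM : M = ENNReal.ofReal α • P + ENNReal.ofReal (1 - α) • Q := rfl
  have hαne : ENNReal.ofReal α ≠ 0 := by
    simp only [ne_eq, ENNReal.ofReal_eq_zero, not_le]; linarith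
  have h1αne : ENNReal.ofReal (1 - α) ≠ 0 := by
    simp only [ne_eq, ENNReal.ofReal_eq_zero, not_le]; linarith
  haveI : IsProbabilityMeasure M := by
    constructor
    rw [hM]
    simp only [Measure.coe_add, Pi.add_apply, Measure.smul_apply, smul_eq_mul,
      measure_univ, mul_one]
    rw [← ENNReal.ofReal_add hα0.le h1α.le]
    norm_num
  have hPM : P ≪ M := by
    refine Measure.AbsolutelyContinuous.mk fun s hs h0 => ?_
    rw [hM] at h0
    simp only [Measure.coe_add, Pi.add_apply, Measure.smul_apply, smul_eq_mul,
      add_eq_zero, mul_eq_zero] at h0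
    rcases h0.1 with h | h
    · exact absurd h hαne
    · exact h
  have hQM : Q ≪ M := by
    refine Measure.AbsolutelyContinuous.mk fun s hs h0 => ?_
    rw [hM] at h0
    simp only [Measure.coe_add, Pi.add_apply, Measure.smul_apply, smul_eq_mul,
      add_eq_zero, mul_eq_zero] at h0
    rcases h0.2 with h | h
    · exact absurd h h1αne
    · exact h
  set g : Ω → ℝ≥0∞ := P.rnDeriv M with hgdef
  have hgm : Measurable g := Measure.measurable_rnDeriv P M
  have hKtop : (ENNReal.ofReal α)⁻¹ ≠ ⊤ := ENNReal.inv_ne_top.2 hαne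
  have hK : ∀ᵐ x ∂M, g x ≤ (ENNReal.ofReal α)⁻¹ := by
    have hle : ENNReal.ofReal α • P ≤ M := by
      rw [hM]; exact Measure.le_add_right le_rfl
    have h1 := Measure.rnDeriv_le_one_of_le hle
    have h2 := Measure.rnDeriv_smul_left_of_ne_top P M
      (r := ENNReal.ofReal α) ENNReal.ofReal_ne_top
    filter_upwards [h1, h2] with x hx1 hx2
    rw [ENNReal.le_inv_iff_mul_le, mul_comm]
    calc ENNReal.ofReal α * g x = (ENNReal.ofReal α • P).rnDeriv M x := by
          rw [hx2]; simp [hgdef]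
      _ ≤ 1 := hx1
  have hgtopM : ∀ᵐ x ∂M, g x ≠ ⊤ := Measure.rnDeriv_ne_top P M
  have hgposP : ∀ᵐ x ∂P, 0 < g x := Measure.rnDeriv_pos hPM
  have hgtopP : ∀ᵐ x ∂P, g x ≠ ⊤ := hPM.ae_le hgtopM
  have hGbM : ∀ᵐ x ∂M, (g x).toReal ≤ α⁻¹ := by
    filter_upwards [hK] with x hx
    have := ENNReal.toReal_mono hKtop hx
    rwa [ENNReal.toReal_inv, ENNReal.toReal_ofReal hα0.le] at this
  have hGposP : ∀ᵐ x ∂P, 0 < (g x).toReal := by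
    filter_upwards [hgposP, hgtopP] with x hx1 hx2
    exact ENNReal.toReal_pos hx1.ne' hx2
  set B : ℝ≥0∞ := ∫⁻ x, g x ^ γ ∂M with hBdef
  have hgγm : Measurable fun x => g x ^ γ := hgm.pow measurable_const
  have hgγ1m : Measurable fun x => g x ^ (γ - 1) := hgm.pow measurable_const
  have hBtop : B ≠ ⊤ := by
    refine ne_top_of_le_ne_top
      (ENNReal.rpow_ne_top_of_nonneg hγ0.le hKtop) ?_
    calc B ≤ ∫⁻ _x, ((ENNReal.ofReal α)⁻¹) ^ γ ∂M :=
          lintegral_mono_ae (hK.mono fun x hx => ENNReal.rpow_le_rpow hx hγ0.le)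
      _ = ((ENNReal.ofReal α)⁻¹) ^ γ := by simp
  have hB0 : B ≠ 0 := by
    intro h0
    have h1 : (fun x => g x ^ γ) =ᵐ[M] 0 := (lintegral_eq_zero_iff hgγm).1 h0
    have h2 : g =ᵐ[M] 0 := by
      filter_upwards [h1] with x hx
      simp only [Pi.zero_apply] at hx ⊢
      rcases ENNReal.rpow_eq_zero_iff.1 hx with ⟨h, _⟩ | ⟨_, h⟩
      · exact h
      · linarith
    have h3 : ∫⁻ x, g x ∂M = 1 := by
      have h := lintegral_rnDeriv_mul hPM
        (aemeasurable_const (b := (1 : ℝ≥0∞)) (μ := M))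
      simpa [hgdef] using h
    rw [lintegral_congr_ae h2] at h3
    simp at h3
  have hBpos : 0 < B.toReal := ENNReal.toReal_pos hB0 hBtop
  -- `∫⁻ g^(γ-1) dP = B`
  have hAeq : ∫⁻ x, g x ^ (γ - 1) ∂P = B := by
    rw [← lintegral_rnDeriv_mul hPM hgγ1m.aemeasurable, hBdef]
    refine lintegral_congr_ae ?_
    filter_upwards [hgtopM] with x hxtop
    show P.rnDeriv M x * g x ^ (γ - 1) = g x ^ γ
    rcases eq_or_ne (g x) 0 with h0 | h0
    · rw [show P.rnDeriv M x = g x from rfl, h0]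
      simp [ENNReal.zero_rpow_of_pos hγ0]
    · calc P.rnDeriv M x * g x ^ (γ - 1) = g x ^ (1 : ℝ) * g x ^ (γ - 1) := by
            rw [ENNReal.rpow_one]
        _ = g x ^ (1 + (γ - 1)) := (ENNReal.rpow_add _ _ h0 hxtop).symm
        _ = g x ^ γ := by norm_num
  -- conversion between Bochner and Lebesgue integrals of powers of the density
  have hconv : ∀ (μ : Measure Ω) (c : ℝ), (∀ᵐ x ∂μ, g x ^ c ≠ ⊤) →
      ∫ x, (g x).toReal ^ c ∂μ = (∫⁻ x, g x ^ c ∂μ).toReal := by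
    intro μ c hμ
    rw [integral_eq_lintegral_of_nonneg_ae
      (Filter.Eventually.of_forall fun x => Real.rpow_nonneg ENNReal.toReal_nonneg c)
      (hgm.ennreal_toReal.pow measurable_const).aestronglyMeasurable]
    congr 1
    refine lintegral_congr_ae (hμ.mono fun x hx => ?_)
    show ENNReal.ofReal ((g x).toReal ^ c) = g x ^ c
    rw [ENNReal.toReal_rpow, ENNReal.ofReal_toReal hx]
  have hABreal : ∫ x, (g x).toReal ^ (γ - 1) ∂P = B.toReal := by
    rw [hconv P (γ - 1) ?_, hAeq]
    filter_upwards [hgposP, hgtopP] with x h1 h2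
    exact ennreal_rpow_ne_top h1.ne' h2 _
  -- splitting of `B` over `P` and `Q`
  have hJPtop : ∫⁻ x, g x ^ γ ∂P ≠ ⊤ := by
    intro htop
    apply hBtop
    rw [hBdef, hM, lintegral_add_measure, lintegral_smul_measure, lintegral_smul_measure,
      htop, smul_eq_mul, smul_eq_mul, ENNReal.mul_top hαne]
    simp
  have hJQtop : ∫⁻ x, g x ^ γ ∂Q ≠ ⊤ := by
    intro htop
    apply hBtop
    rw [hBdef, hM, lintegral_add_measure, lintegral_smul_measure, lintegral_smul_measure,
      htop, smul_eq_mul, smul_eq_mul, ENNReal.mul_top h1αne]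
    simp
  have hgtopQ : ∀ᵐ x ∂Q, g x ≠ ⊤ := hQM.ae_le hgtopM
  have hBreal : B.toReal = α * ∫ x, (g x).toReal ^ γ ∂P
      + (1 - α) * ∫ x, (g x).toReal ^ γ ∂Q := by
    rw [hconv P γ (hgtopP.mono fun x hx => ENNReal.rpow_ne_top_of_nonneg hγ0.le hx),
      hconv Q γ (hgtopQ.mono fun x hx => ENNReal.rpow_ne_top_of_nonneg hγ0.le hx),
      hBdef, hM, lintegral_add_measure, lintegral_smul_measure, lintegral_smul_measure,
      smul_eq_mul, smul_eq_mul, ENNReal.toReal_add (ENNReal.mul_ne_top ENNReal.ofReal_ne_top hJPtop)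
        (ENNReal.mul_ne_top ENNReal.ofReal_ne_top hJQtop),
      ENNReal.toReal_mul, ENNReal.toReal_mul, ENNReal.toReal_ofReal hα0.le,
      ENNReal.toReal_ofReal h1α.le]
  rw [hABreal]
  constructor
  · -- upper bound
    rintro r ⟨f, hfm, ⟨C, hC⟩, rfl⟩
    have hF1m : Measurable fun x => ENNReal.ofReal (Real.exp ((γ - 1) * f x)) :=
      (Real.measurable_exp.comp (hfm.const_mul (γ - 1))).ennreal_ofReal
    have hF2m : Measurable fun x => ENNReal.ofReal (Real.exp (γ * f x)) :=
      (Real.measurable_exp.comp (hfm.const_mul γ)).ennreal_ofReal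
    set I1 : ℝ≥0∞ := ∫⁻ x, ENNReal.ofReal (Real.exp ((γ - 1) * f x)) ∂P with hI1def
    set I2 : ℝ≥0∞ := ∫⁻ x, ENNReal.ofReal (Real.exp (γ * f x)) ∂M with hI2def
    obtain ⟨hI1pos, hI1top⟩ := lint_exp_bounds P (γ - 1) C hC
    obtain ⟨hI2pos, hI2top⟩ := lint_exp_bounds M γ C hC
    obtain ⟨hJPpos, hJP2top⟩ := lint_exp_bounds P γ C hC
    obtain ⟨hJQpos, hJQ2top⟩ := lint_exp_bounds Q γ C hC
    have hI1pos' : 0 < I1.toReal := ENNReal.toReal_pos hI1pos.ne' hI1top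
    have hI2pos' : 0 < I2.toReal := ENNReal.toReal_pos hI2pos.ne' hI2top
    have hr1 : ∫ x, Real.exp ((γ - 1) * f x) ∂P = I1.toReal := by
      rw [hI1def, integral_eq_lintegral_of_nonneg_ae
        (Filter.Eventually.of_forall fun x => (Real.exp_pos _).le)
        (Real.measurable_exp.comp (hfm.const_mul (γ - 1))).aestronglyMeasurable]
    have hr2 : α * ∫ x, Real.exp (γ * f x) ∂P + (1 - α) * ∫ x, Real.exp (γ * f x) ∂Q
        = I2.toReal := by
      have h2 : I2 = ENNReal.ofReal α * ∫⁻ x, ENNReal.ofReal (Real.exp (γ * f x)) ∂P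
          + ENNReal.ofReal (1 - α) * ∫⁻ x, ENNReal.ofReal (Real.exp (γ * f x)) ∂Q := by
        rw [hI2def, hM, lintegral_add_measure, lintegral_smul_measure,
          lintegral_smul_measure, smul_eq_mul, smul_eq_mul]
      rw [h2, ENNReal.toReal_add (ENNReal.mul_ne_top ENNReal.ofReal_ne_top hJP2top)
          (ENNReal.mul_ne_top ENNReal.ofReal_ne_top hJQ2top),
        ENNReal.toReal_mul, ENNReal.toReal_mul, ENNReal.toReal_ofReal hα0.le,
        ENNReal.toReal_ofReal h1α.le,
        integral_eq_lintegral_of_nonneg_ae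
          (Filter.Eventually.of_forall fun x => (Real.exp_pos _).le)
          (Real.measurable_exp.comp (hfm.const_mul γ)).aestronglyMeasurable,
        integral_eq_lintegral_of_nonneg_ae
          (Filter.Eventually.of_forall fun x => (Real.exp_pos _).le)
          (Real.measurable_exp.comp (hfm.const_mul γ)).aestronglyMeasurable]
    rw [hr1, hr2]
    rcases hγ with hγlt | hγgt
    · -- case γ < 1
      obtain ⟨-, hγlt1⟩ := hγlt
      have h1γ : 0 < 1 - γ := by linarith
      have hpq : Real.HolderConjugate (1 / γ) (1 / (1 - γ)) := by
        rw [Real.holderConjugate_iff]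
        constructor
        · rw [lt_div_iff₀ hγ0]; linarith
        · rw [one_div, inv_inv, one_div, inv_inv]; ring
      have hum : Measurable fun x =>
          (g x * ENNReal.ofReal (Real.exp ((γ - 1) * f x))) ^ γ :=
        (hgm.mul hF1m).pow measurable_const
      have hvm : Measurable fun x =>
          (ENNReal.ofReal (Real.exp (γ * f x))) ^ (1 - γ) :=
        hF2m.pow measurable_const
      have hHold := ENNReal.lintegral_mul_le_Lp_mul_Lq M hpq hum.aemeasurable hvm.aemeasurable
      have hleft : ∫⁻ x, ((fun x => (g x * ENNReal.ofReal (Real.exp ((γ - 1) * f x))) ^ γ) *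
          (fun x => (ENNReal.ofReal (Real.exp (γ * f x))) ^ (1 - γ))) x ∂M = B := by
        rw [hBdef]
        refine lintegral_congr_ae ?_
        filter_upwards [hgtopM] with x hxtop
        simp only [Pi.mul_apply]
        rw [ENNReal.mul_rpow_of_ne_top hxtop ENNReal.ofReal_ne_top, mul_assoc]
        have hone : (ENNReal.ofReal (Real.exp ((γ - 1) * f x))) ^ γ *
            (ENNReal.ofReal (Real.exp (γ * f x))) ^ (1 - γ) = 1 := by
          rw [ENNReal.ofReal_rpow_of_pos (Real.exp_pos _),
            ENNReal.ofReal_rpow_of_pos (Real.exp_pos _), ← Real.exp_mul, ← Real.exp_mul,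
            ← ENNReal.ofReal_mul (Real.exp_pos _).le, ← Real.exp_add,
            show (γ - 1) * f x * γ + γ * f x * (1 - γ) = 0 by ring]
          simp
        rw [hone, mul_one]
      have hu_pow : ∫⁻ x, ((g x * ENNReal.ofReal (Real.exp ((γ - 1) * f x))) ^ γ) ^ (1 / γ) ∂M
          = I1 := by
        rw [hI1def, ← lintegral_rnDeriv_mul hPM hF1m.aemeasurable]
        refine lintegral_congr fun x => ?_
        rw [← ENNReal.rpow_mul, mul_one_div_cancel hγ0', ENNReal.rpow_one]
      have hv_pow : ∫⁻ x, ((ENNReal.ofReal (Real.exp (γ * f x))) ^ (1 - γ)) ^ (1 / (1 - γ)) ∂M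
          = I2 := by
        rw [hI2def]
        refine lintegral_congr fun x => ?_
        rw [← ENNReal.rpow_mul, mul_one_div_cancel h1γ.ne', ENNReal.rpow_one]
      have hmain : B ≤ I1 ^ γ * I2 ^ (1 - γ) := by
        rw [← hleft]
        refine le_trans hHold ?_
        rw [hu_pow, hv_pow, one_div_one_div, one_div_one_div]
      have hrtop : I1 ^ γ * I2 ^ (1 - γ) ≠ ⊤ :=
        ENNReal.mul_ne_top (ENNReal.rpow_ne_top_of_nonneg hγ0.le hI1top)
          (ENNReal.rpow_ne_top_of_nonneg h1γ.le hI2top)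
      have hreal : B.toReal ≤ I1.toReal ^ γ * I2.toReal ^ (1 - γ) := by
        have h := ENNReal.toReal_mono hrtop hmain
        rwa [ENNReal.toReal_mul, ← ENNReal.toReal_rpow, ← ENNReal.toReal_rpow] at h
      have hlog : Real.log B.toReal ≤ γ * Real.log I1.toReal
          + (1 - γ) * Real.log I2.toReal := by
        calc Real.log B.toReal ≤ Real.log (I1.toReal ^ γ * I2.toReal ^ (1 - γ)) :=
              Real.log_le_log hBpos hreal
          _ = γ * Real.log I1.toReal + (1 - γ) * Real.log I2.toReal := by
              rw [Real.log_mul (Real.rpow_pos_of_pos hI1pos' _).ne'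
                (Real.rpow_pos_of_pos hI2pos' _).ne', Real.log_rpow hI1pos',
                Real.log_rpow hI2pos']
      have hc : 1 / (γ * (γ - 1)) < 0 := by
        apply div_neg_of_pos_of_neg one_pos
        exact mul_neg_of_pos_of_neg hγ0 (by linarith)
      have h := mul_le_mul_of_nonpos_left hlog hc.le
      have hid : 1 / (γ * (γ - 1)) * (γ * Real.log I1.toReal
          + (1 - γ) * Real.log I2.toReal)
          = 1 / (γ - 1) * Real.log I1.toReal - 1 / γ * Real.log I2.toReal := by
        field_simp
        ring
      rw [hid] at h
      linarith
    · -- case 1 < γ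
      have hγgt1 : (1 : ℝ) < γ := hγgt
      have hpq : Real.HolderConjugate (γ / (γ - 1)) γ := by
        rw [Real.holderConjugate_iff]
        constructor
        · rw [lt_div_iff₀ (by linarith)]; linarith
        · rw [inv_div]; field_simp; ring
      have hHold := ENNReal.lintegral_mul_le_Lp_mul_Lq M hpq hF1m.aemeasurable hgm.aemeasurable
      have hleft : ∫⁻ x, ((fun x => ENNReal.ofReal (Real.exp ((γ - 1) * f x))) * g) x ∂M
          = I1 := by
        rw [hI1def, ← lintegral_rnDeriv_mul hPM hF1m.aemeasurable]
        refine lintegral_congr fun x => ?_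
        simp only [Pi.mul_apply]
        exact mul_comm _ _
      have hmid : ∫⁻ x, (ENNReal.ofReal (Real.exp ((γ - 1) * f x))) ^ (γ / (γ - 1)) ∂M
          = I2 := by
        rw [hI2def]
        refine lintegral_congr fun x => ?_
        rw [ENNReal.ofReal_rpow_of_pos (Real.exp_pos _), ← Real.exp_mul]
        congr 2
        field_simp
      have hmain : I1 ≤ I2 ^ ((γ - 1) / γ) * B ^ (1 / γ) := by
        rw [← hleft]
        refine le_trans hHold ?_
        rw [hmid, one_div_div]
      have hrtop : I2 ^ ((γ - 1) / γ) * B ^ (1 / γ) ≠ ⊤ :=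
        ENNReal.mul_ne_top
          (ENNReal.rpow_ne_top_of_nonneg (div_nonneg (by linarith) hγ0.le) hI2top)
          (ENNReal.rpow_ne_top_of_nonneg (by positivity) hBtop)
      have hreal : I1.toReal ≤ I2.toReal ^ ((γ - 1) / γ) * B.toReal ^ (1 / γ) := by
        have h := ENNReal.toReal_mono hrtop hmain
        rwa [ENNReal.toReal_mul, ← ENNReal.toReal_rpow, ← ENNReal.toReal_rpow] at h
      have hlog : Real.log I1.toReal ≤ (γ - 1) / γ * Real.log I2.toReal
          + 1 / γ * Real.log B.toReal := by
        calc Real.log I1.toReal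
            ≤ Real.log (I2.toReal ^ ((γ - 1) / γ) * B.toReal ^ (1 / γ)) :=
              Real.log_le_log hI1pos' hreal
          _ = (γ - 1) / γ * Real.log I2.toReal + 1 / γ * Real.log B.toReal := by
              rw [Real.log_mul (Real.rpow_pos_of_pos hI2pos' _).ne'
                (Real.rpow_pos_of_pos hBpos _).ne', Real.log_rpow hI2pos',
                Real.log_rpow hBpos]
      have hcpos : (0 : ℝ) ≤ 1 / (γ - 1) := le_of_lt (one_div_pos.2 (by linarith))
      have h := mul_le_mul_of_nonneg_left hlog hcpos
      have hid : 1 / (γ - 1) * ((γ - 1) / γ * Real.log I2.toReal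
          + 1 / γ * Real.log B.toReal)
          = 1 / γ * Real.log I2.toReal + 1 / (γ * (γ - 1)) * Real.log B.toReal := by
        field_simp
      rw [hid] at h
      linarith
  · -- least upper bound
    intro b hb
    set cl : ℕ → Ω → ℝ := fun n x =>
      min (max ((g x).toReal) (Real.exp (-(n : ℝ)))) (Real.exp (n : ℝ)) with hcldef
    set F : ℕ → Ω → ℝ := fun n x => Real.log (cl n x) with hFdef
    have hclpos : ∀ (n : ℕ) (x : Ω), 0 < cl n x := fun n x =>
      lt_min (lt_of_lt_of_le (Real.exp_pos _) (le_max_right _ _)) (Real.exp_pos _)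
    have hcl_lb : ∀ (n : ℕ) (x : Ω), Real.exp (-(n : ℝ)) ≤ cl n x := fun n x =>
      le_min (le_max_right _ _) (Real.exp_le_exp.2 (_root_.neg_le_self (Nat.cast_nonneg n)))
    have hclm : ∀ n, Measurable (cl n) := fun n =>
      (hgm.ennreal_toReal.max measurable_const).min measurable_const
    have hFm : ∀ n, Measurable (F n) := fun n => Real.measurable_log.comp (hclm n)
    have hFbd : ∀ n : ℕ, ∀ x, |F n x| ≤ (n : ℝ) := by
      intro n x
      rw [abs_le]
      constructor
      · calc -(n : ℝ) = Real.log (Real.exp (-(n : ℝ))) := (Real.log_exp _).symm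
          _ ≤ Real.log (cl n x) := Real.log_le_log (Real.exp_pos _) (hcl_lb n x)
      · calc Real.log (cl n x) ≤ Real.log (Real.exp (n : ℝ)) :=
              Real.log_le_log (hclpos n x) (min_le_right _ _)
          _ = (n : ℝ) := Real.log_exp _
    have hFexp : ∀ (c : ℝ) (n : ℕ) (x : Ω), Real.exp (c * F n x) = cl n x ^ c := by
      intro c n x
      rw [Real.rpow_def_of_pos (hclpos n x), mul_comm]
    -- eventually the clamp equals the density
    have hclconst : ∀ x, 0 < (g x).toReal →
        ∀ᶠ n : ℕ in atTop, cl n x = (g x).toReal := by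
      intro x hx
      obtain ⟨N, hN⟩ := exists_nat_ge |Real.log ((g x).toReal)|
      refine Filter.eventually_atTop.2 ⟨N, fun n hn => ?_⟩
      have hn' : |Real.log ((g x).toReal)| ≤ (n : ℝ) :=
        le_trans hN (Nat.cast_le.2 hn)
      have h1 : Real.exp (-(n : ℝ)) ≤ (g x).toReal := by
        conv_rhs => rw [← Real.exp_log hx]
        exact Real.exp_le_exp.2 (le_trans (neg_le_neg hn')
          (neg_abs_le _))
      have h2 : (g x).toReal ≤ Real.exp (n : ℝ) := by
        conv_lhs => rw [← Real.exp_log hx]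
        exact Real.exp_le_exp.2 (le_trans (le_abs_self _) hn')
      rw [hcldef]
      simp only
      rw [max_eq_left h1, min_eq_left h2]
    have hexp_tendsto : ∀ (c : ℝ), c ≠ 0 → ∀ x, 0 < (g x).toReal →
        Tendsto (fun n : ℕ => Real.exp (c * F n x)) atTop (𝓝 ((g x).toReal ^ c)) := by
      intro c hc x hx
      have hev : ∀ᶠ n : ℕ in atTop,
          Real.exp (c * F n x) = (g x).toReal ^ c := by
        filter_upwards [hclconst x hx] with n hn
        rw [hFexp c n x, hn]
      exact Tendsto.congr' (by filter_upwards [hev] with n hn using hn.symm)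
        tendsto_const_nhds
    -- convergence of the `γ` integrals for a measure dominated by M
    have hT2 : ∀ (μ : Measure Ω), IsProbabilityMeasure μ → μ ≪ M →
        Tendsto (fun n : ℕ => ∫ x, Real.exp (γ * F n x) ∂μ) atTop
          (𝓝 (∫ x, (g x).toReal ^ γ ∂μ)) := by
      intro μ hμprob hμM
      haveI := hμprob
      refine tendsto_integral_of_dominated_convergence (fun _ => (α⁻¹ + 1) ^ γ)
        (fun n => (Real.measurable_exp.comp ((hFm n).const_mul γ)).aestronglyMeasurable)
        (integrable_const _) (fun n => ?_) ?_
      · filter_upwards [hμM.ae_le hGbM] with x hx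
        rw [Real.norm_eq_abs, abs_of_pos (Real.exp_pos _), hFexp γ n x]
        have hcl_le : cl n x ≤ α⁻¹ + 1 := by
          refine le_trans (min_le_left _ _) (max_le ?_ ?_)
          · exact le_trans hx (le_add_of_nonneg_right zero_le_one)
          · calc Real.exp (-(n : ℝ)) ≤ 1 :=
                  Real.exp_le_one_iff.2 (neg_nonpos.2 (Nat.cast_nonneg n))
              _ ≤ α⁻¹ + 1 := le_add_of_nonneg_left (by positivity)
        exact Real.rpow_le_rpow (hclpos n x).le hcl_le hγ0.le
      · refine Filter.Eventually.of_forall fun x => ?_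
        rcases eq_or_lt_of_le (ENNReal.toReal_nonneg : 0 ≤ (g x).toReal) with h0 | hpos
        · -- density vanishes at x
          have hcl0 : ∀ n : ℕ, cl n x = Real.exp (-(n : ℝ)) := by
            intro n
            rw [hcldef]
            simp only
            rw [← h0, max_eq_right (Real.exp_pos _).le,
              min_eq_left (Real.exp_le_exp.2 (_root_.neg_le_self (Nat.cast_nonneg n)))]
          have heq : ∀ n : ℕ, Real.exp (γ * F n x) = Real.exp (γ * -(n : ℝ)) := by
            intro n
            rw [hFdef]
            simp only
            rw [hcl0 n, Real.log_exp]
          have hlim0 : Tendsto (fun n : ℕ => Real.exp (γ * -(n : ℝ))) atTop (𝓝 0) := by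
            refine Real.tendsto_exp_atBot.comp ?_
            refine Tendsto.const_mul_atBot hγ0 ?_
            exact tendsto_neg_atTop_atBot.comp tendsto_natCast_atTop_atTop
          have : ((g x).toReal) ^ γ = 0 := by
            rw [← h0, Real.zero_rpow hγ0']
          rw [this]
          exact (Tendsto.congr (fun n => (heq n).symm) hlim0)
        · exact hexp_tendsto γ hγ0' x hpos
    -- convergence of the `γ - 1` integral over P
    have hT1 : Tendsto (fun n : ℕ => ∫ x, Real.exp ((γ - 1) * F n x) ∂P) atTop
        (𝓝 (∫ x, (g x).toReal ^ (γ - 1) ∂P)) := by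
      have hbint : Integrable (fun x => (g x).toReal ^ (γ - 1) + ((α⁻¹ + 1) ^ (γ - 1) + 1)) P := by
        refine Integrable.add ?_ (integrable_const _)
        have h1 : Integrable (fun x => (g x ^ (γ - 1)).toReal) P :=
          integrable_toReal_of_lintegral_ne_top hgγ1m.aemeasurable (by rw [hAeq]; exact hBtop)
        exact h1.congr (Filter.Eventually.of_forall fun x =>
          (ENNReal.toReal_rpow (g x) (γ - 1)).symm)
      refine tendsto_integral_of_dominated_convergence
        (fun x => (g x).toReal ^ (γ - 1) + ((α⁻¹ + 1) ^ (γ - 1) + 1))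
        (fun n => (Real.measurable_exp.comp ((hFm n).const_mul (γ - 1))).aestronglyMeasurable)
        hbint (fun n => ?_) ?_
      · filter_upwards [hPM.ae_le hGbM, hGposP] with x hx hxpos
        rw [Real.norm_eq_abs, abs_of_pos (Real.exp_pos _), hFexp (γ - 1) n x]
        rcases hγ with hγlt | hγgt
        · -- γ < 1 : use the lower clamp
          have h1γ : γ - 1 ≤ 0 := by linarith [hγlt.2]
          have hmin_pos : 0 < min ((g x).toReal) 1 := lt_min hxpos one_pos
          have hmin_le : min ((g x).toReal) 1 ≤ cl n x := by
            refine le_min (le_trans (min_le_left _ _) (le_max_left _ _)) ?_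
            exact le_trans (min_le_right _ _) (Real.one_le_exp (Nat.cast_nonneg n))
          have hstep : cl n x ^ (γ - 1) ≤ (min ((g x).toReal) 1) ^ (γ - 1) :=
            Real.rpow_le_rpow_of_nonpos hmin_pos hmin_le h1γ
          refine le_trans hstep ?_
          rcases le_total ((g x).toReal) 1 with hle | hle
          · rw [min_eq_left hle]
            have : (0:ℝ) ≤ (α⁻¹ + 1) ^ (γ - 1) + 1 := by positivity
            linarith
          · rw [min_eq_right hle, Real.one_rpow]
            have h2 : (0:ℝ) ≤ (g x).toReal ^ (γ - 1) := Real.rpow_nonneg ENNReal.toReal_nonneg _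
            have h3 : (0:ℝ) ≤ (α⁻¹ + 1) ^ (γ - 1) := by positivity
            linarith
        · -- 1 < γ : use the upper clamp
          have h1γ : (0:ℝ) ≤ γ - 1 := by linarith [Set.mem_Ioi.1 hγgt]
          have hcl_le : cl n x ≤ α⁻¹ + 1 := by
            refine le_trans (min_le_left _ _) (max_le ?_ ?_)
            · exact le_trans hx (le_add_of_nonneg_right zero_le_one)
            · calc Real.exp (-(n : ℝ)) ≤ 1 :=
                    Real.exp_le_one_iff.2 (neg_nonpos.2 (Nat.cast_nonneg n))
                _ ≤ α⁻¹ + 1 := le_add_of_nonneg_left (by positivity)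
          have hstep : cl n x ^ (γ - 1) ≤ (α⁻¹ + 1) ^ (γ - 1) :=
            Real.rpow_le_rpow (hclpos n x).le hcl_le h1γ
          have h2 : (0:ℝ) ≤ (g x).toReal ^ (γ - 1) := Real.rpow_nonneg ENNReal.toReal_nonneg _
          linarith
      · filter_upwards [hGposP] with x hx
        exact hexp_tendsto (γ - 1) hγ1' x hx
    -- assemble the limit
    have hsum : Tendsto (fun n : ℕ =>
        α * ∫ x, Real.exp (γ * F n x) ∂P + (1 - α) * ∫ x, Real.exp (γ * F n x) ∂Q)
        atTop (𝓝 (B.toReal)) := by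
      have h := ((hT2 P inferInstance hPM).const_mul α).add
        ((hT2 Q inferInstance hQM).const_mul (1 - α))
      rwa [← hBreal] at h
    have hT1' : Tendsto (fun n : ℕ => ∫ x, Real.exp ((γ - 1) * F n x) ∂P) atTop
        (𝓝 (B.toReal)) := by rwa [hABreal] at hT1
    have hlim : Tendsto (fun n : ℕ =>
        1 / (γ - 1) * Real.log (∫ x, Real.exp ((γ - 1) * F n x) ∂P)
        - 1 / γ * Real.log (α * ∫ x, Real.exp (γ * F n x) ∂P
            + (1 - α) * ∫ x, Real.exp (γ * F n x) ∂Q)) atTop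
        (𝓝 (1 / (γ - 1) * Real.log B.toReal - 1 / γ * Real.log B.toReal)) :=
      ((hT1'.log hBpos.ne').const_mul _).sub ((hsum.log hBpos.ne').const_mul _)
    rw [show 1 / (γ - 1) * Real.log B.toReal - 1 / γ * Real.log B.toReal
        = 1 / (γ * (γ - 1)) * Real.log B.toReal by field_simp; ring] at hlim
    exact le_of_tendsto hlim (Filter.Eventually.of_forall fun n =>
      hb ⟨F n, hFm n, ⟨(n : ℝ), hFbd n⟩, rfl⟩)
end

section
/- Let P and Q be probability measures on a standard Borel space and α ∈ (0,1). Then D_KL(P ‖ αP + (1−α)Q) = sup_{f ∈ F} [ ∫ f dP − log( α ∫ e^{f} dP + (1−α) ∫ e^{f} dQ ) ], where the supremum is over the set F of all bounded measurable real-valued functions, and for every such f the bracketed quantity is at most D_KL(P ‖ αP + (1−α)Q). -/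
open MeasureTheory Real

private lemma integrable_of_abs_le {Ω : Type*} [MeasurableSpace Ω] {μ : Measure Ω}
    [IsFiniteMeasure μ] {f : Ω → ℝ} (hf : Measurable f) {C : ℝ} (h : ∀ x, |f x| ≤ C) :
    Integrable f μ :=
  (integrable_const C).mono' hf.aestronglyMeasurable
    (Filter.Eventually.of_forall fun x => (Real.norm_eq_abs _ ▸ h x))

/-- **Donsker–Varadhan representation of the skew KL divergence.**
For probability measures `P, Q` on a standard Borel space and `α ∈ (0,1)`,
`D_KL(P ‖ αP + (1-α)Q) = ∫ log (dP/d(αP+(1-α)Q)) dP` is the least upper bound of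
`∫ f dP - log (α ∫ e^f dP + (1-α) ∫ e^f dQ)` over all bounded measurable
functions `f`; in particular every such `f` gives a lower bound. -/
theorem skew_kl_donsker_varadhan
    {Ω : Type*} [MeasurableSpace Ω] [StandardBorelSpace Ω]
    (P Q : Measure Ω) [IsProbabilityMeasure P] [IsProbabilityMeasure Q]
    (α : ℝ) (hα : α ∈ Set.Ioo (0 : ℝ) 1) :
    IsLUB
      {r : ℝ | ∃ f : Ω → ℝ, Measurable f ∧ (∃ C : ℝ, ∀ x, |f x| ≤ C) ∧
        r = (∫ x, f x ∂P)
          - Real.log (α * ∫ x, Real.exp (f x) ∂P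
              + (1 - α) * ∫ x, Real.exp (f x) ∂Q)}
      (∫ x, Real.log ((P.rnDeriv (mixture α P Q) x).toReal) ∂P) := by
  obtain ⟨hα0, hα1⟩ := hα
  set ν := mixture α P Q with hν
  have hαne : ENNReal.ofReal α ≠ 0 := by
    simp [ENNReal.ofReal_eq_zero, not_le, hα0]
  have hνprob : IsProbabilityMeasure ν := by
    constructor
    rw [hν, mixture]
    simp only [Measure.coe_add, Measure.coe_smul, Pi.add_apply, Pi.smul_apply,
      measure_univ, smul_eq_mul, mul_one]
    rw [← ENNReal.ofReal_add hα0.le (by linarith)]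
    norm_num
  have hPν : P ≪ ν := by
    intro s hs
    rw [hν, mixture] at hs
    simp only [Measure.coe_add, Measure.coe_smul, Pi.add_apply, Pi.smul_apply,
      smul_eq_mul, add_eq_zero, mul_eq_zero] at hs
    rcases hs.1 with h | h
    · exact absurd h hαne
    · exact h
  set D : Ω → ℝ := fun x => (P.rnDeriv ν x).toReal with hD
  have hDmeas : Measurable D := (Measure.measurable_rnDeriv _ _).ennreal_toReal
  have hDnn : ∀ x, 0 ≤ D x := fun x => ENNReal.toReal_nonneg
  -- D ≤ α⁻¹ a.e. ν
  have hD_le : ∀ᵐ x ∂ν, D x ≤ α⁻¹ := by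
    have h1 : (ENNReal.ofReal α • P) ≤ ν := by
      rw [hν, mixture]; exact Measure.le_add_right le_rfl
    have h2 := Measure.rnDeriv_le_one_of_le h1
    have h3 := Measure.rnDeriv_smul_left_of_ne_top P ν (r := ENNReal.ofReal α)
      ENNReal.ofReal_ne_top
    filter_upwards [h2, h3] with x h2x h3x
    rw [h3x] at h2x
    simp only [Pi.smul_apply, Pi.one_apply, smul_eq_mul] at h2x
    have hle : P.rnDeriv ν x ≤ (ENNReal.ofReal α)⁻¹ := by
      rw [ENNReal.le_inv_iff_mul_le, mul_comm]
      exact h2x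
    calc D x ≤ ((ENNReal.ofReal α)⁻¹).toReal :=
          ENNReal.toReal_mono (by simp [hαne]) hle
      _ = α⁻¹ := by rw [ENNReal.toReal_inv, ENNReal.toReal_ofReal hα0.le]
  have hD_leP : ∀ᵐ x ∂P, D x ≤ α⁻¹ := hPν.ae_le hD_le
  have hD_posP : ∀ᵐ x ∂P, 0 < D x := by
    filter_upwards [Measure.rnDeriv_pos hPν, hPν.ae_le (Measure.rnDeriv_lt_top P ν)]
      with x h1 h2
    exact ENNReal.toReal_pos h1.ne' h2.ne
  -- integral of D over ν is 1
  have hDint : Integrable D ν := Measure.integrable_toReal_rnDeriv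
  have hDint1 : ∫ x, D x ∂ν = 1 := by
    rw [hD, Measure.integral_toReal_rnDeriv hPν, probReal_univ]
  -- integrability of log D under P
  have h_int_logD : Integrable (fun x => log (D x)) P := by
    rw [← MeasureTheory.integrable_rnDeriv_smul_iff hPν]
    have hB : ∀ᵐ x ∂ν, ‖(P.rnDeriv ν x).toReal • log (D x)‖ ≤ 1 + α⁻¹ * log α⁻¹ := by
      filter_upwards [hD_le] with x hx
      have hDD : (P.rnDeriv ν x).toReal = D x := rfl
      rw [hDD, smul_eq_mul, Real.norm_eq_abs]
      have hαlog : 0 ≤ α⁻¹ * log α⁻¹ :=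
        mul_nonneg (inv_pos.mpr hα0).le
          (Real.log_nonneg (one_le_inv_iff₀.mpr ⟨hα0, hα1.le⟩))
      rcases le_or_gt (D x) 1 with h1 | h1
      · rcases eq_or_lt_of_le (hDnn x) with h0 | h0
        · rw [← h0]
          simp only [zero_mul, abs_zero]
          linarith
        · have hlt : |D x * log (D x)| < 1 := by
            rw [mul_comm]; exact Real.abs_log_mul_self_lt (D x) h0 h1
          linarith
      · have hlog : 0 ≤ log (D x) := Real.log_nonneg h1.le
        rw [abs_mul, abs_of_nonneg (hDnn x), abs_of_nonneg hlog]
        have hαi : (1:ℝ) ≤ α⁻¹ := (one_le_inv_iff₀.mpr ⟨hα0, hα1.le⟩)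
        have h2 : log (D x) ≤ log α⁻¹ := Real.log_le_log (by linarith) hx
        nlinarith [Real.log_nonneg hαi]
    exact (integrable_const _).mono'
      ((hDmeas.smul (hDmeas.log)).aestronglyMeasurable) hB
  set K := ∫ x, log (D x) ∂P with hK
  -- exp of a bounded measurable function is integrable
  have h_exp_int : ∀ (μ : Measure Ω), IsProbabilityMeasure μ → ∀ (f : Ω → ℝ) (C : ℝ),
      Measurable f → (∀ x, |f x| ≤ C) → Integrable (fun x => exp (f x)) μ := by
    intro μ hμ f C hfm hfC
    exact integrable_of_abs_le hfm.exp (C := exp C) fun x => by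
      rw [abs_of_nonneg (exp_pos _).le]
      exact Real.exp_le_exp.mpr (abs_le.mp (hfC x)).2
  -- the mixture integral decomposes
  have h_decomp : ∀ (f : Ω → ℝ), Measurable f → ∀ C : ℝ, (∀ x, |f x| ≤ C) →
      α * ∫ x, exp (f x) ∂P + (1 - α) * ∫ x, exp (f x) ∂Q = ∫ x, exp (f x) ∂ν := by
    intro f hfm C hfC
    rw [hν, mixture, integral_add_measure
        ((h_exp_int P inferInstance f C hfm hfC).smul_measure ENNReal.ofReal_ne_top)
        ((h_exp_int Q inferInstance f C hfm hfC).smul_measure ENNReal.ofReal_ne_top),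
      integral_smul_measure, integral_smul_measure,
      ENNReal.toReal_ofReal hα0.le, ENNReal.toReal_ofReal (by linarith : (0:ℝ) ≤ 1-α),
      smul_eq_mul, smul_eq_mul]
  -- main upper bound (Gibbs' inequality)
  have hmain_le : ∀ (f : Ω → ℝ), Measurable f → ∀ C : ℝ, (∀ x, |f x| ≤ C) →
      (∫ x, f x ∂P) - log (∫ x, exp (f x) ∂ν) ≤ K := by
    intro f hfm C hfC
    set Z := ∫ x, exp (f x) ∂ν with hZ
    have hintν : Integrable (fun x => exp (f x)) ν := h_exp_int ν hνprob f C hfm hfC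
    have hZpos : 0 < Z := by
      have h1 : ∫ _x, exp (-C) ∂ν ≤ Z :=
        integral_mono (integrable_const _) hintν fun x =>
          Real.exp_le_exp.mpr (neg_le_of_abs_le (hfC x))
      rw [integral_const, probReal_univ] at h1
      simp only [ENNReal.toReal_one, one_smul] at h1
      exact lt_of_lt_of_le (exp_pos _) h1
    set h : Ω → ℝ := fun x => exp (f x) / D x with hh
    have hh_meas : Measurable h := hfm.exp.div hDmeas
    have hsh_le : ∀ x, (P.rnDeriv ν x).toReal • h x ≤ exp (f x) := by
      intro x
      rcases eq_or_lt_of_le (hDnn x) with h0 | h0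
      · rw [smul_eq_mul]
        show D x * h x ≤ _
        rw [← h0, zero_mul]
        exact (exp_pos _).le
      · rw [smul_eq_mul]
        show D x * h x ≤ _
        rw [hh, mul_div_cancel₀ _ h0.ne']
    have hsh_nn : ∀ x, 0 ≤ (P.rnDeriv ν x).toReal • h x := by
      intro x
      rw [smul_eq_mul]
      exact mul_nonneg (hDnn x) (div_nonneg (exp_pos _).le (hDnn x))
    have hinth_ν : Integrable (fun x => (P.rnDeriv ν x).toReal • h x) ν := by
      refine integrable_of_abs_le (hDmeas.smul hh_meas) (C := exp C) fun x => ?_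
      rw [abs_of_nonneg (hsh_nn x)]
      exact (hsh_le x).trans (by
        rw [← abs_of_nonneg (exp_pos (f x)).le]
        rw [abs_of_nonneg (exp_pos _).le]
        exact Real.exp_le_exp.mpr (abs_le.mp (hfC x)).2)
    have hinth_P : Integrable h P := (MeasureTheory.integrable_rnDeriv_smul_iff hPν).mp hinth_ν
    have hhZ : ∫ x, h x ∂P ≤ Z := by
      rw [← MeasureTheory.integral_rnDeriv_smul hPν (f := h)]
      exact integral_mono hinth_ν hintν hsh_le
    have hhnn : 0 ≤ ∫ x, h x ∂P :=
      integral_nonneg fun x => div_nonneg (exp_pos _).le (hDnn x)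
    have hpt : ∀ᵐ x ∂P, f x - log (D x) - log Z ≤ h x / Z - 1 := by
      filter_upwards [hD_posP] with x hx
      have hy : 0 < exp (f x) / (D x * Z) := by positivity
      have hlog := Real.log_le_sub_one_of_pos hy
      rw [Real.log_div (exp_ne_zero _) (by positivity), Real.log_exp,
        Real.log_mul hx.ne' hZpos.ne'] at hlog
      have hdd : h x / Z = exp (f x) / (D x * Z) := by rw [hh, div_div]
      rw [hdd]
      linarith
    have h_int_f : Integrable f P := integrable_of_abs_le hfm (hfC)
    have hineq := integral_mono_ae
      ((h_int_f.sub h_int_logD).sub (integrable_const (log Z)))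
      ((hinth_P.div_const Z).sub (integrable_const 1)) hpt
    simp only [Pi.sub_apply] at hineq
    have e1 : ∫ a, f a - log (D a) - log Z ∂P = (∫ x, f x ∂P) - K - log Z := by
      rw [integral_sub _ (integrable_const (log Z)),
        integral_sub h_int_f h_int_logD, integral_const, probReal_univ]
      · simp [hK]
      · exact h_int_f.sub h_int_logD
    have e2 : ∫ a, h a / Z - 1 ∂P = (∫ x, h x ∂P) / Z - 1 := by
      rw [integral_sub _ (integrable_const 1), integral_div, integral_const, probReal_univ]
      · simp
      · exact hinth_P.div_const Z
    rw [e1, e2] at hineq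
    have hdiv : (∫ x, h x ∂P) / Z ≤ 1 := (div_le_one hZpos).mpr hhZ
    linarith
  constructor
  · rintro r ⟨f, hfm, ⟨C, hfC⟩, rfl⟩
    rw [h_decomp f hfm C hfC]
    exact hmain_le f hfm C hfC
  · intro b hb
    have hαinv1 : (1:ℝ) ≤ α⁻¹ := one_le_inv_iff₀.mpr ⟨hα0, hα1.le⟩
    have hlogα : 0 ≤ log α⁻¹ := Real.log_nonneg hαinv1
    set g : ℕ → Ω → ℝ := fun n x => max (min (D x) α⁻¹) (exp (-(n:ℝ))) with hg
    have hg_pos : ∀ (n : ℕ) x, 0 < g n x := fun n x =>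
      lt_of_lt_of_le (exp_pos _) (le_max_right _ _)
    have hg_lb : ∀ (n : ℕ) x, exp (-(n:ℝ)) ≤ g n x := fun n x => le_max_right _ _
    have hg_ub : ∀ (n : ℕ) x, g n x ≤ α⁻¹ := fun n x => max_le (min_le_right _ _)
      ((Real.exp_le_one_iff.mpr (by simp)).trans hαinv1)
    have hg_meas : ∀ n, Measurable (g n) := fun n =>
      (hDmeas.min measurable_const).max measurable_const
    set F : ℕ → Ω → ℝ := fun n x => log (g n x) with hF
    have hFmeas : ∀ n, Measurable (F n) := fun n => (hg_meas n).log
    have hFexp : ∀ (n : ℕ) x, exp (F n x) = g n x := fun n x => Real.exp_log (hg_pos n x)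
    have hFbd : ∀ (n : ℕ) x, |F n x| ≤ (n:ℝ) + log α⁻¹ := by
      intro n x
      rw [abs_le]
      constructor
      · have h1 : -(n:ℝ) ≤ F n x := by
          rw [hF]
          calc -(n:ℝ) = log (exp (-(n:ℝ))) := (Real.log_exp _).symm
            _ ≤ log (g n x) := Real.log_le_log (exp_pos _) (hg_lb n x)
        linarith
      · have h2 : F n x ≤ log α⁻¹ := Real.log_le_log (hg_pos n x) (hg_ub n x)
        have : (0:ℝ) ≤ (n:ℝ) := Nat.cast_nonneg n
        linarith
    -- integrals of g n over ν
    have hgint : ∀ n, Integrable (g n) ν := fun n =>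
      integrable_of_abs_le (hg_meas n) (C := α⁻¹) fun x => by
        rw [abs_of_pos (hg_pos n x)]; exact hg_ub n x
    have hZub : ∀ n : ℕ, ∫ x, g n x ∂ν ≤ 1 + exp (-(n:ℝ)) := by
      intro n
      have hle : ∀ x, g n x ≤ D x + exp (-(n:ℝ)) := fun x =>
        max_le (by linarith [min_le_left (D x) α⁻¹, (exp_pos (-(n:ℝ))).le])
          (le_add_of_nonneg_left (hDnn x))
      calc ∫ x, g n x ∂ν ≤ ∫ x, D x + exp (-(n:ℝ)) ∂ν :=
            integral_mono (hgint n) (hDint.add (integrable_const _)) hle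
        _ = 1 + exp (-(n:ℝ)) := by
            rw [integral_add hDint (integrable_const _), hDint1, integral_const,
              probReal_univ]
            simp
    have hZpos : ∀ n : ℕ, 0 < ∫ x, g n x ∂ν := by
      intro n
      have h1 : ∫ _x, exp (-(n:ℝ)) ∂ν ≤ ∫ x, g n x ∂ν :=
        integral_mono (integrable_const _) (hgint n) (hg_lb n)
      rw [integral_const, probReal_univ] at h1
      simp only [ENNReal.toReal_one, one_smul] at h1
      exact lt_of_lt_of_le (exp_pos _) h1
    -- each F n gives an element of the set, bounded by b
    have hmem : ∀ n : ℕ, (∫ x, F n x ∂P) - log (∫ x, g n x ∂ν) ≤ b := by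
      intro n
      have heq : α * ∫ x, exp (F n x) ∂P + (1 - α) * ∫ x, exp (F n x) ∂Q
          = ∫ x, g n x ∂ν := by
        rw [h_decomp (F n) (hFmeas n) ((n:ℝ) + log α⁻¹) (hFbd n)]
        exact integral_congr_ae (Filter.Eventually.of_forall fun x => hFexp n x)
      have : (∫ x, F n x ∂P) - log (∫ x, g n x ∂ν) ∈
          {r : ℝ | ∃ f : Ω → ℝ, Measurable f ∧ (∃ C : ℝ, ∀ x, |f x| ≤ C) ∧
            r = (∫ x, f x ∂P)
              - Real.log (α * ∫ x, Real.exp (f x) ∂P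
                  + (1 - α) * ∫ x, Real.exp (f x) ∂Q)} :=
        ⟨F n, hFmeas n, ⟨(n:ℝ) + log α⁻¹, hFbd n⟩, by rw [heq]⟩
      exact hb this
    -- lower bound sequence
    have hLle : ∀ n : ℕ, (∫ x, F n x ∂P) - log (1 + exp (-(n:ℝ))) ≤ b := by
      intro n
      have := Real.log_le_log (hZpos n) (hZub n)
      linarith [hmem n]
    -- convergence of ∫ F n dP to K
    have hT1 : Filter.Tendsto (fun n => ∫ x, F n x ∂P) Filter.atTop (nhds K) := by
      rw [hK]
      refine tendsto_integral_of_dominated_convergence (fun x => |log (D x)|)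
        (fun n => (hFmeas n).aestronglyMeasurable) h_int_logD.abs ?_ ?_
      · intro n
        filter_upwards [hD_posP, hD_leP] with x hx1 hx2
        rw [Real.norm_eq_abs]
        show |log (g n x)| ≤ |log (D x)|
        have hmin : min (D x) α⁻¹ = D x := min_eq_left hx2
        rcases le_or_gt (exp (-(n:ℝ))) (D x) with hc | hc
        · have hgx : g n x = D x := by
            show max (min (D x) α⁻¹) (exp (-(n:ℝ))) = D x
            rw [hmin]; exact max_eq_left hc
          rw [hgx]
        · have hgx : g n x = exp (-(n:ℝ)) := by
            show max (min (D x) α⁻¹) (exp (-(n:ℝ))) = exp (-(n:ℝ))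
            rw [hmin]; exact max_eq_right hc.le
          rw [hgx, Real.log_exp]
          have hlt : log (D x) < -(n:ℝ) := by
            calc log (D x) < log (exp (-(n:ℝ))) := Real.log_lt_log hx1 hc
              _ = -(n:ℝ) := Real.log_exp _
          have hn0 : (0:ℝ) ≤ (n:ℝ) := Nat.cast_nonneg n
          rw [abs_of_nonpos (by linarith : -(n:ℝ) ≤ 0),
            abs_of_nonpos (by linarith : log (D x) ≤ 0)]
          linarith
      · filter_upwards [hD_posP, hD_leP] with x hx1 hx2
        have hmin : min (D x) α⁻¹ = D x := min_eq_left hx2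
        have hev : ∀ᶠ n : ℕ in Filter.atTop, F n x = log (D x) := by
          rw [Filter.eventually_atTop]
          refine ⟨⌈-log (D x)⌉₊, fun n hn => ?_⟩
          have h1 : -log (D x) ≤ (n:ℝ) := le_trans (Nat.le_ceil _) (Nat.cast_le.mpr hn)
          have h2 : exp (-(n:ℝ)) ≤ D x := by
            calc exp (-(n:ℝ)) ≤ exp (log (D x)) := Real.exp_le_exp.mpr (by linarith)
              _ = D x := Real.exp_log hx1
          show log (g n x) = log (D x)
          have hgx : g n x = D x := by
            show max (min (D x) α⁻¹) (exp (-(n:ℝ))) = D x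
            rw [hmin]; exact max_eq_left h2
          rw [hgx]
        exact Filter.Tendsto.congr' (hev.mono fun n h => h.symm) tendsto_const_nhds
    -- convergence of log (1 + exp (-n)) to 0
    have hT2 : Filter.Tendsto (fun n : ℕ => log (1 + exp (-(n:ℝ)))) Filter.atTop (nhds 0) := by
      have he : Filter.Tendsto (fun n : ℕ => exp (-(n:ℝ))) Filter.atTop (nhds 0) := by
        have : ∀ n : ℕ, exp (-(n:ℝ)) = (exp (-1)) ^ n := by
          intro n
          rw [← Real.exp_nat_mul]
          ring_nf
        simp only [this]
        exact tendsto_pow_atTop_nhds_zero_of_lt_one (exp_pos _).le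
          (Real.exp_lt_one_iff.mpr (by norm_num))
      have hcont : Filter.Tendsto (fun n : ℕ => (1:ℝ) + exp (-(n:ℝ)))
          Filter.atTop (nhds 1) := by
        have h1 : Filter.Tendsto (fun _ : ℕ => (1:ℝ)) Filter.atTop (nhds 1) :=
          tendsto_const_nhds
        simpa using h1.add he
      have hlog := (Real.continuousAt_log (by norm_num : (1:ℝ) ≠ 0)).tendsto.comp hcont
      simpa [Function.comp_def] using hlog
    have hTL : Filter.Tendsto (fun n => (∫ x, F n x ∂P) - log (1 + exp (-(n:ℝ))))
        Filter.atTop (nhds K) := by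
      have := hT1.sub hT2
      simpa using this
    exact le_of_tendsto hTL (Filter.Eventually.of_forall hLle)
end

section
/- Let X and Y be random variables on standard Borel spaces with joint law P_XY and marginals P_X, P_Y. For every α ∈ [0,1], every integer K ≥ 1, and every bounded measurable f : X×Y → ℝ, the α-CPC objective satisfies I_CPC^(α)(f) ≥ E_{(x,y)∼P_XY}[f(x,y)] − log( α E_{(x,y)∼P_XY}[e^{f(x,y)}] + (1−α) E_{(x,y)∼P_X⊗P_Y}[e^{f(x,y)}] ). -/
open MeasureTheory Real

/-- The `α`-CPC objective: `μ` is the joint law `P_XY`, the expectation is over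
`(x,y) ∼ μ` together with `K` i.i.d. negatives `y_1,…,y_K ∼ μ.snd = P_Y`
independent of `(x,y)`. -/
noncomputable def iCPC {X Y : Type*} [MeasurableSpace X] [MeasurableSpace Y]
    (μ : Measure (X × Y)) (α : ℝ) (K : ℕ) (f : X × Y → ℝ) : ℝ :=
  ∫ q : (X × Y) × (Fin K → Y),
    Real.log (Real.exp (f q.1) /
      (α * Real.exp (f q.1)
        + ((1 - α) / K) * ∑ j : Fin K, Real.exp (f (q.1.1, q.2 j))))
    ∂(μ.prod (Measure.pi fun _ : Fin K => μ.snd))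

lemma map_eval_pi' {ι : Type*} [Fintype ι] {Z : ι → Type*} [∀ i, MeasurableSpace (Z i)]
    (μ : ∀ i, Measure (Z i)) [∀ i, IsProbabilityMeasure (μ i)] (j : ι) :
    (Measure.pi μ).map (Function.eval j) = μ j := by
  classical
  ext s hs
  rw [Measure.map_apply (measurable_pi_apply j) hs, Set.eval_preimage, Measure.pi_pi,
    Finset.prod_eq_single j]
  · simp
  · intro i _ hij
    simp [Function.update_of_ne hij]
  · simp

lemma log_integral_jensen {Z : Type*} [MeasurableSpace Z] (ν : Measure Z)
    [IsProbabilityMeasure ν] (g : Z → ℝ) (c₀ : ℝ) (hc₀ : 0 < c₀)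
    (hgi : Integrable g ν) (hli : Integrable (fun z => Real.log (g z)) ν)
    (hl : ∀ z, c₀ ≤ g z) :
    ∫ z, Real.log (g z) ∂ν ≤ Real.log (∫ z, g z ∂ν) := by
  set c := ∫ z, g z ∂ν with hc
  have hpos : ∀ z, 0 < g z := fun z => hc₀.trans_le (hl z)
  have hc0 : 0 < c := by
    have : c₀ ≤ c := by
      have := integral_mono (integrable_const c₀) hgi (fun z => hl z)
      simpa using this
    linarith
  have key : ∀ z, Real.log (g z) ≤ g z / c - 1 + Real.log c := by
    intro z
    have h1 : Real.log (g z / c) ≤ g z / c - 1 :=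
      Real.log_le_sub_one_of_pos (div_pos (hpos z) hc0)
    have h2 : Real.log (g z / c) = Real.log (g z) - Real.log c :=
      Real.log_div (hpos z).ne' hc0.ne'
    linarith
  have hint2 : Integrable (fun z => g z / c - 1 + Real.log c) ν :=
    ((hgi.div_const c).sub (integrable_const 1)).add (integrable_const _)
  have h1 : Integrable (fun z => g z / c - 1) ν := (hgi.div_const c).sub (integrable_const 1)
  calc ∫ z, Real.log (g z) ∂ν ≤ ∫ z, (g z / c - 1 + Real.log c) ∂ν :=
        integral_mono hli hint2 key
    _ = c / c - 1 + Real.log c := by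
        rw [integral_add h1 (integrable_const _),
          integral_sub (hgi.div_const c) (integrable_const 1), integral_div]
        simp
        rfl
    _ = Real.log c := by rw [div_self hc0.ne']; ring

/-- **The α-CPC objective dominates the skew Donsker–Varadhan objective.**
For every `α ∈ [0,1]`, `K ≥ 1` and bounded measurable critic `f`,
`I_CPC^(α)(f) ≥ E_{P_XY}[f] - log (α E_{P_XY}[e^f] + (1-α) E_{P_X⊗P_Y}[e^f])`. -/
theorem iCPC_ge_skew_dv
    {X Y : Type*} [MeasurableSpace X] [MeasurableSpace Y]
    [StandardBorelSpace X] [StandardBorelSpace Y]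
    (μ : Measure (X × Y)) [IsProbabilityMeasure μ]
    (α : ℝ) (hα : α ∈ Set.Icc (0 : ℝ) 1) (K : ℕ) (hK : 1 ≤ K)
    (f : X × Y → ℝ) (hf : Measurable f) (hb : ∃ C : ℝ, ∀ p, |f p| ≤ C) :
    iCPC μ α K f ≥
      (∫ p, f p ∂μ)
        - Real.log (α * ∫ p, Real.exp (f p) ∂μ
            + (1 - α) * ∫ p, Real.exp (f p) ∂(μ.fst.prod μ.snd)) := by
  classical
  obtain ⟨hα0, hα1⟩ := hα
  obtain ⟨C₀, hC₀⟩ := hb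
  set C : ℝ := max C₀ 0 with hCdef
  have hfC : ∀ p, |f p| ≤ C := fun p => (hC₀ p).trans (le_max_left _ _)
  have hKpos : (0:ℝ) < (K:ℝ) := by exact_mod_cast Nat.lt_of_lt_of_le Nat.zero_lt_one hK
  set Pk : Measure (Fin K → Y) := Measure.pi fun _ => μ.snd with hPkdef
  haveI : IsProbabilityMeasure Pk := by rw [hPkdef]; infer_instance
  set ν : Measure ((X × Y) × (Fin K → Y)) := μ.prod Pk with hνdef
  haveI : IsProbabilityMeasure ν := by rw [hνdef]; infer_instance
  set G : (X × Y) × (Fin K → Y) → ℝ :=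
    fun q => α * Real.exp (f q.1)
      + ((1 - α) / K) * ∑ j : Fin K, Real.exp (f (q.1.1, q.2 j)) with hGdef
  -- measurability
  have hφm : ∀ j : Fin K, Measurable
      (fun q : (X × Y) × (Fin K → Y) => (q.1.1, q.2 j)) := fun j =>
    (measurable_fst.comp measurable_fst).prodMk ((measurable_pi_apply j).comp measurable_snd)
  have hGm : Measurable G := by
    rw [hGdef]
    exact (((hf.comp measurable_fst).exp).const_mul α).add
      ((Finset.measurable_sum _ fun j _ => (hf.comp (hφm j)).exp).const_mul _)
  -- bounds
  have hexp_le : ∀ p, Real.exp (f p) ≤ Real.exp C := fun p =>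
    Real.exp_le_exp.mpr ((le_abs_self _).trans (hfC p))
  have hexp_ge : ∀ p, Real.exp (-C) ≤ Real.exp (f p) := fun p =>
    Real.exp_le_exp.mpr ((abs_le.mp (hfC p)).1)
  have hGl : ∀ q, Real.exp (-C) ≤ G q := by
    intro q
    have h1 : α * Real.exp (-C) ≤ α * Real.exp (f q.1) :=
      mul_le_mul_of_nonneg_left (hexp_ge _) hα0
    have h2 : ((1 - α) / K) * ((K : ℝ) * Real.exp (-C))
        ≤ ((1 - α) / K) * ∑ j : Fin K, Real.exp (f (q.1.1, q.2 j)) := by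
      refine mul_le_mul_of_nonneg_left ?_ (div_nonneg (by linarith) hKpos.le)
      calc (K : ℝ) * Real.exp (-C) = ∑ _j : Fin K, Real.exp (-C) := by
            simp [Finset.sum_const, mul_comm]
        _ ≤ ∑ j : Fin K, Real.exp (f (q.1.1, q.2 j)) :=
            Finset.sum_le_sum fun j _ => hexp_ge _
    have hkey : α * Real.exp (-C) + ((1 - α) / K) * ((K : ℝ) * Real.exp (-C))
        = Real.exp (-C) := by field_simp; ring
    calc Real.exp (-C) = α * Real.exp (-C) + ((1 - α) / K) * ((K : ℝ) * Real.exp (-C)) :=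
          hkey.symm
      _ ≤ G q := add_le_add h1 h2
  have hGu : ∀ q, G q ≤ Real.exp C := by
    intro q
    have h1 : α * Real.exp (f q.1) ≤ α * Real.exp C :=
      mul_le_mul_of_nonneg_left (hexp_le _) hα0
    have h2 : ((1 - α) / K) * ∑ j : Fin K, Real.exp (f (q.1.1, q.2 j))
        ≤ ((1 - α) / K) * ((K : ℝ) * Real.exp C) := by
      refine mul_le_mul_of_nonneg_left ?_ (div_nonneg (by linarith) hKpos.le)
      calc ∑ j : Fin K, Real.exp (f (q.1.1, q.2 j)) ≤ ∑ _j : Fin K, Real.exp C :=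
            Finset.sum_le_sum fun j _ => hexp_le _
        _ = (K : ℝ) * Real.exp C := by simp [Finset.sum_const, mul_comm]
    have hkey : α * Real.exp C + ((1 - α) / K) * ((K : ℝ) * Real.exp C)
        = Real.exp C := by field_simp; ring
    calc G q ≤ α * Real.exp C + ((1 - α) / K) * ((K : ℝ) * Real.exp C) := add_le_add h1 h2
      _ = Real.exp C := hkey
  have hGpos : ∀ q, 0 < G q := fun q => (Real.exp_pos _).trans_le (hGl q)
  -- integrability
  have hGint : Integrable G ν := by
    refine Integrable.mono' (integrable_const (Real.exp C)) hGm.aestronglyMeasurable ?_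
    exact ae_of_all _ fun q => by
      rw [Real.norm_eq_abs, abs_of_pos (hGpos q)]; exact hGu q
  have hlogGint : Integrable (fun q => Real.log (G q)) ν := by
    refine Integrable.mono' (integrable_const C)
      (Real.measurable_log.comp hGm).aestronglyMeasurable ?_
    refine ae_of_all _ fun q => ?_
    rw [Real.norm_eq_abs, abs_le]
    constructor
    · calc -C = Real.log (Real.exp (-C)) := (Real.log_exp _).symm
        _ ≤ Real.log (G q) := Real.log_le_log (Real.exp_pos _) (hGl q)
    · calc Real.log (G q) ≤ Real.log (Real.exp C) := Real.log_le_log (hGpos q) (hGu q)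
        _ = C := Real.log_exp _
  have hf1int : Integrable (fun q : (X × Y) × (Fin K → Y) => f q.1) ν := by
    refine Integrable.mono' (integrable_const C)
      (hf.comp measurable_fst).aestronglyMeasurable ?_
    exact ae_of_all _ fun q => hfC _
  -- rewrite integrand
  have hrw : iCPC μ α K f = ∫ q, (f q.1 - Real.log (G q)) ∂ν := by
    rw [iCPC, ← hPkdef, ← hνdef]
    refine integral_congr_ae (ae_of_all _ fun q => ?_)
    show Real.log (Real.exp (f q.1) /
        (α * Real.exp (f q.1) + ((1 - α) / K) * ∑ j : Fin K, Real.exp (f (q.1.1, q.2 j))))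
      = f q.1 - Real.log (G q)
    have hne : α * Real.exp (f q.1)
        + ((1 - α) / K) * ∑ j : Fin K, Real.exp (f (q.1.1, q.2 j)) ≠ 0 := by
      have := (hGpos q).ne'
      rw [hGdef] at this
      exact this
    rw [Real.log_div (Real.exp_ne_zero _) hne, Real.log_exp]
  -- first coordinate integral
  have hmapfst : ν.map Prod.fst = μ := by
    rw [hνdef, Measure.map_fst_prod]
    simp
  have hfst : ∀ (h : X × Y → ℝ), Measurable h →
      ∫ q, h q.1 ∂ν = ∫ p, h p ∂μ := by
    intro h hm
    rw [← hmapfst, integral_map measurable_fst.aemeasurable hm.aestronglyMeasurable]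
  -- joint map for negatives
  have hmapj : ∀ j : Fin K,
      ν.map (fun q : (X × Y) × (Fin K → Y) => (q.1.1, q.2 j)) = μ.fst.prod μ.snd := by
    intro j
    have heq : (fun q : (X × Y) × (Fin K → Y) => (q.1.1, q.2 j))
        = Prod.map Prod.fst (Function.eval j) := rfl
    rw [hνdef, heq, ← Measure.map_prod_map _ _ measurable_fst (measurable_pi_apply j),
      hPkdef, map_eval_pi']
    rfl
  have hnegint : ∀ j : Fin K,
      ∫ q, Real.exp (f (q.1.1, q.2 j)) ∂ν = ∫ p, Real.exp (f p) ∂(μ.fst.prod μ.snd) := by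
    intro j
    rw [← hmapj j, integral_map (hφm j).aemeasurable (hf.exp).aestronglyMeasurable]
  -- the value of ∫ G
  have hintexp : ∀ j : Fin K,
      Integrable (fun q : (X × Y) × (Fin K → Y) => Real.exp (f (q.1.1, q.2 j))) ν := by
    intro j
    refine Integrable.mono' (integrable_const (Real.exp C))
      (hf.comp (hφm j)).exp.aestronglyMeasurable ?_
    exact ae_of_all _ fun q => by
      rw [Real.norm_eq_abs, abs_of_pos (Real.exp_pos _)]; exact hexp_le _
  have hintexp1 : Integrable (fun q : (X × Y) × (Fin K → Y) => Real.exp (f q.1)) ν := by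
    refine Integrable.mono' (integrable_const (Real.exp C))
      (hf.comp measurable_fst).exp.aestronglyMeasurable ?_
    exact ae_of_all _ fun q => by
      rw [Real.norm_eq_abs, abs_of_pos (Real.exp_pos _)]; exact hexp_le _
  have hsumint : Integrable
      (fun q : (X × Y) × (Fin K → Y) => ∑ j : Fin K, Real.exp (f (q.1.1, q.2 j))) ν := by
    have := integrable_finset_sum (μ := ν) (Finset.univ : Finset (Fin K))
      (fun j _ => hintexp j)
    simpa using this
  have hGval : ∫ q, G q ∂ν
      = α * (∫ p, Real.exp (f p) ∂μ)
        + (1 - α) * ∫ p, Real.exp (f p) ∂(μ.fst.prod μ.snd) := by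
    have e1 : ∫ q, G q ∂ν
        = α * (∫ q, Real.exp (f q.1) ∂ν)
          + ((1 - α) / K) * ∫ q, (∑ j : Fin K, Real.exp (f (q.1.1, q.2 j))) ∂ν := by
      rw [hGdef]
      rw [integral_add (hintexp1.const_mul α) (hsumint.const_mul _),
        integral_const_mul, integral_const_mul]
    have e2 : ∫ q, (∑ j : Fin K, Real.exp (f (q.1.1, q.2 j))) ∂ν
        = (K : ℝ) * ∫ p, Real.exp (f p) ∂(μ.fst.prod μ.snd) := by
      rw [integral_finset_sum _ (fun j _ => hintexp j)]
      simp [hnegint, Finset.sum_const, mul_comm]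
    rw [e1, e2, hfst _ hf.exp]
    field_simp
  -- put it together
  rw [ge_iff_le, hrw, integral_sub hf1int hlogGint, hfst f hf, ← hGval]
  have hJ : ∫ q, Real.log (G q) ∂ν ≤ Real.log (∫ q, G q ∂ν) :=
    log_integral_jensen ν G (Real.exp (-C)) (Real.exp_pos _) hGint hlogGint hGl
  linarith
end

section
/- Let n ≥ 1 and K ≥ 1 be integers, and for each i = 1,…,n let X_i and Y_{i,1},…,Y_{i,K} be almost surely positive random variables such that the (K+1)-tuple (X_i, Y_{i,1},…,Y_{i,K}) is exchangeable, i.e., its joint law is invariant under all permutations of its K+1 coordinates. Then for every α ∈ [1/(K+1), 1/2], E[ (1/n) Σ_{i=1}^n X_i / ( α X_i + ((1−α)/K) Σ_{j=1}^K Y_{i,j} ) ] ≤ 1. -/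
open MeasureTheory Real

lemma aux_term (m a b z S : ℝ) (hm : 1 ≤ m) (ha : 0 ≤ a) (hb : 0 < b)
    (hab : a + m * b = 1) (hz : 0 < z) (hS : 0 < S) :
    z / (a * z + b * S) ≤ 1 + b * m ^ 2 * (z / S - 1 / m) := by
  have hd : 0 < a * z + b * S := by positivity
  rw [div_le_iff₀ hd]
  have hm0 : 0 < m := lt_of_lt_of_le one_pos hm
  have ha' : a = 1 - m * b := by linarith
  have h1 : (1 + b * m ^ 2 * (z / S - 1 / m)) * (a * z + b * S) - z
      = a * b * (m * z - S) ^ 2 / S := by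
    rw [ha']; field_simp; ring
  nlinarith [div_nonneg (by positivity : (0:ℝ) ≤ a * b * (m * z - S) ^ 2) hS.le]

lemma aux_sum (K : ℕ) (hK : 1 ≤ K) (α : ℝ)
    (hα1 : 1 / ((K : ℝ) + 1) ≤ α) (hα2 : α ≤ 1 / 2)
    (z : Fin (K + 1) → ℝ) (hz : ∀ k, 0 < z k) :
    ∑ k, z k / (α * z k + ((1 - α) / K) * ((∑ j, z j) - z k)) ≤ (K : ℝ) + 1 := by
  have hK0 : (0:ℝ) < K := by exact_mod_cast hK
  set b : ℝ := (1 - α) / K with hb_def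
  have hb : 0 < b := by
    have : α < 1 := lt_of_le_of_lt hα2 (by norm_num)
    exact div_pos (by linarith) hK0
  set a : ℝ := α - b with ha_def
  have ha : 0 ≤ a := by
    have h1 : 1 ≤ α * ((K:ℝ) + 1) := by
      rw [div_le_iff₀ (by positivity : (0:ℝ) < (K:ℝ)+1)] at hα1
      linarith
    have : b ≤ α := by
      rw [hb_def, div_le_iff₀ hK0]; nlinarith
    linarith
  set m : ℝ := (K : ℝ) + 1 with hm_def
  have hm : 1 ≤ m := by rw [hm_def]; linarith
  have hab : a + m * b = 1 := by
    rw [ha_def, hm_def, hb_def]; field_simp; ring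
  set S : ℝ := ∑ j, z j with hS_def
  have hS : 0 < S := Finset.sum_pos (fun k _ => hz k) (by simp)
  have hterm : ∀ k : Fin (K+1), z k / (α * z k + b * (S - z k))
      ≤ 1 + b * m ^ 2 * (z k / S - 1 / m) := by
    intro k
    have : α * z k + b * (S - z k) = a * z k + b * S := by rw [ha_def]; ring
    rw [this]
    exact aux_term m a b (z k) S hm ha hb hab (hz k) hS
  calc ∑ k, z k / (α * z k + b * (S - z k))
      ≤ ∑ k : Fin (K+1), (1 + b * m ^ 2 * (z k / S - 1 / m)) :=
        Finset.sum_le_sum (fun k _ => hterm k)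
    _ = (K : ℝ) + 1 := by
        rw [Finset.sum_add_distrib]
        simp only [Finset.sum_const, Finset.card_univ, Fintype.card_fin, nsmul_eq_mul]
        have h2 : ∑ k : Fin (K+1), b * m ^ 2 * (z k / S - 1 / m)
            = b * m ^ 2 * ((∑ k : Fin (K+1), z k / S) - (K+1) * (1/m)) := by
          rw [← Finset.mul_sum, Finset.sum_sub_distrib]
          simp [Finset.sum_const, Finset.card_univ]
        rw [h2]
        have h3 : ∑ k : Fin (K+1), z k / S = 1 := by
          rw [← Finset.sum_div, ← hS_def, div_self hS.ne']
        rw [h3, hm_def]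
        push_cast
        field_simp
        ring

/-- **Lemma (large-α case): importance-weight bound for exchangeable tuples.**
If for each `i` the `(K+1)`-tuple `(X_i, Y_{i,1}, …, Y_{i,K})` of a.s. positive
random variables is exchangeable, then for every `α ∈ [1/(K+1), 1/2]`,
`E[(1/n) Σ_i X_i / (α X_i + ((1-α)/K) Σ_j Y_{i,j})] ≤ 1`. -/
theorem exchangeable_ratio_bound_large_alpha
    {Ω : Type*} [MeasurableSpace Ω] (μ : Measure Ω) [IsProbabilityMeasure μ]
    (n K : ℕ) (hn : 1 ≤ n) (hK : 1 ≤ K)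
    (X : Fin n → Ω → ℝ) (Y : Fin n → Fin K → Ω → ℝ)
    (hX : ∀ i, Measurable (X i)) (hY : ∀ i j, Measurable (Y i j))
    (hXpos : ∀ i, ∀ᵐ ω ∂μ, 0 < X i ω)
    (hYpos : ∀ i j, ∀ᵐ ω ∂μ, 0 < Y i j ω)
    (hexch : ∀ (i : Fin n) (σ : Equiv.Perm (Fin (K + 1))),
      Measure.map (fun ω => fun j : Fin (K + 1) =>
          (Fin.cons (X i ω) (fun j' : Fin K => Y i j' ω) : Fin (K + 1) → ℝ) (σ j)) μ
        = Measure.map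
            (fun ω => (Fin.cons (X i ω) (fun j' : Fin K => Y i j' ω) : Fin (K + 1) → ℝ)) μ)
    (α : ℝ) (hα : α ∈ Set.Icc (1 / ((K : ℝ) + 1)) (1 / 2)) :
    (∫ ω, (1 / n : ℝ) * ∑ i : Fin n,
        X i ω / (α * X i ω + ((1 - α) / K) * ∑ j : Fin K, Y i j ω) ∂μ)
      ≤ 1 := by
  obtain ⟨hα1, hα2⟩ := hα
  have hK0 : (0:ℝ) < K := by exact_mod_cast hK
  have hαpos : 0 < α := lt_of_lt_of_le (by positivity) hα1
  have hb : 0 < (1 - α) / K := div_pos (by linarith [lt_of_le_of_lt hα2 (by norm_num : (1:ℝ)/2 < 1)]) hK0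
  set b : ℝ := (1 - α) / K with hb_def
  -- the per-i integrand
  set f : Fin n → Ω → ℝ := fun i ω => X i ω / (α * X i ω + b * ∑ j : Fin K, Y i j ω) with hf_def
  -- integrability and bound for each i
  have key : ∀ i : Fin n, Integrable (f i) μ ∧ ∫ ω, f i ω ∂μ ≤ 1 := by
    intro i
    set Z : Ω → (Fin (K+1) → ℝ) := fun ω => (Fin.cons (X i ω) (fun j' => Y i j' ω) : Fin (K+1) → ℝ) with hZ_def
    have hZmeas : Measurable Z := by
      apply measurable_pi_lambda
      intro j
      refine Fin.cases ?_ ?_ j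
      · simpa [hZ_def] using hX i
      · intro j'; simpa [hZ_def] using hY i j'
    -- a.e. positivity of all coordinates of Z
    have hZpos : ∀ᵐ ω ∂μ, ∀ k, 0 < Z ω k := by
      rw [ae_all_iff]
      intro k
      refine Fin.cases ?_ ?_ k
      · simpa [hZ_def] using hXpos i
      · intro j'; simpa [hZ_def] using hYpos i j'
    set g : (Fin (K+1) → ℝ) → ℝ :=
      fun z => z 0 / (α * z 0 + b * ((∑ j, z j) - z 0)) with hg_def
    have hgmeas : Measurable g := by
      apply Measurable.div
      · exact measurable_pi_apply 0
      · exact ((measurable_const.mul (measurable_pi_apply 0)).add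
          (measurable_const.mul ((Finset.measurable_sum _ (fun j _ => measurable_pi_apply j)).sub
            (measurable_pi_apply 0))))
    set h : Fin (K+1) → Ω → ℝ :=
      fun k ω => Z ω k / (α * Z ω k + b * ((∑ j, Z ω j) - Z ω k)) with hh_def
    have hhmeas : ∀ k, Measurable (h k) := by
      intro k
      apply Measurable.div
      · exact (measurable_pi_apply k).comp hZmeas
      · exact ((measurable_const.mul ((measurable_pi_apply k).comp hZmeas)).add
          (measurable_const.mul ((Finset.measurable_sum _ (fun j _ => (measurable_pi_apply j).comp hZmeas)).sub
            ((measurable_pi_apply k).comp hZmeas))))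
    -- a.e. bounds on h k
    have hhbound : ∀ k, ∀ᵐ ω ∂μ, ‖h k ω‖ ≤ 1 / α := by
      intro k
      filter_upwards [hZpos] with ω hpos
      have hzk := hpos k
      have hrest : 0 ≤ (∑ j, Z ω j) - Z ω k := by
        have : Z ω k + ∑ j ∈ Finset.univ.erase k, Z ω j = ∑ j, Z ω j := by
          rw [Finset.add_sum_erase _ _ (Finset.mem_univ k)]
        nlinarith [Finset.sum_nonneg (fun j (_ : j ∈ Finset.univ.erase k) => (hpos j).le)]
      have hden : α * Z ω k ≤ α * Z ω k + b * ((∑ j, Z ω j) - Z ω k) := by nlinarith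
      have hden0 : 0 < α * Z ω k + b * ((∑ j, Z ω j) - Z ω k) :=
        lt_of_lt_of_le (by positivity) hden
      rw [Real.norm_eq_abs, abs_of_nonneg (div_nonneg hzk.le hden0.le)]
      rw [div_le_div_iff₀ hden0 hαpos]
      nlinarith
    have hhint : ∀ k, Integrable (h k) μ := fun k =>
      Integrable.mono' (integrable_const (1/α)) (hhmeas k).aestronglyMeasurable (hhbound k)
    -- f i = h 0
    have hf0 : f i = h 0 := by
      funext ω
      simp only [hf_def, hh_def, hZ_def, Fin.cons_zero, Fin.sum_cons]
      ring_nf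
    -- exchangeability: ∫ h 0 = ∫ h k for every k
    have hswap : ∀ k : Fin (K+1), ∫ ω, h 0 ω ∂μ = ∫ ω, h k ω ∂μ := by
      intro k
      have e1 : ∫ ω, h 0 ω ∂μ = ∫ z, g z ∂(Measure.map Z μ) := by
        rw [integral_map hZmeas.aemeasurable hgmeas.aestronglyMeasurable]
      have hperm := hexch i (Equiv.swap 0 k)
      have hZσmeas : Measurable (fun ω => fun j : Fin (K+1) => Z ω (Equiv.swap 0 k j)) :=
        measurable_pi_lambda _ (fun j => (measurable_pi_apply _).comp hZmeas)
      have e2 : ∫ z, g z ∂(Measure.map Z μ)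
          = ∫ ω, g (fun j => Z ω (Equiv.swap 0 k j)) ∂μ := by
        rw [← hperm, integral_map hZσmeas.aemeasurable hgmeas.aestronglyMeasurable]
      have e3 : ∀ ω, g (fun j => Z ω (Equiv.swap 0 k j)) = h k ω := by
        intro ω
        simp only [hg_def, hh_def]
        have hsum : ∑ j : Fin (K+1), Z ω (Equiv.swap 0 k j) = ∑ j, Z ω j :=
          Equiv.sum_comp (Equiv.swap 0 k) (Z ω)
        rw [hsum, Equiv.swap_apply_left]
      rw [e1, e2]
      exact integral_congr_ae (Filter.Eventually.of_forall e3)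
    -- sum over k
    have hsum_int : ∫ ω, ∑ k : Fin (K+1), h k ω ∂μ = ((K:ℝ)+1) * ∫ ω, h 0 ω ∂μ := by
      rw [integral_finset_sum _ (fun k _ => hhint k)]
      have : ∀ k : Fin (K+1), ∫ ω, h k ω ∂μ = ∫ ω, h 0 ω ∂μ := fun k => (hswap k).symm
      rw [Finset.sum_congr rfl (fun k _ => this k), Finset.sum_const, Finset.card_univ,
        Fintype.card_fin, nsmul_eq_mul]
      push_cast; ring
    have hptwise : ∀ᵐ ω ∂μ, ∑ k : Fin (K+1), h k ω ≤ (K:ℝ) + 1 := by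
      filter_upwards [hZpos] with ω hpos
      exact aux_sum K hK α hα1 hα2 (Z ω) hpos
    have hle : ((K:ℝ)+1) * ∫ ω, h 0 ω ∂μ ≤ (K:ℝ) + 1 := by
      rw [← hsum_int]
      calc ∫ ω, ∑ k : Fin (K+1), h k ω ∂μ
          ≤ ∫ _, ((K:ℝ)+1) ∂μ := integral_mono_ae
            (integrable_finset_sum _ (fun k _ => hhint k)) (integrable_const _) hptwise
        _ = (K:ℝ) + 1 := by simp
    have hK1 : (0:ℝ) < (K:ℝ) + 1 := by positivity
    constructor
    · rw [hf0]; exact hhint 0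
    · rw [hf0]
      exact le_of_mul_le_mul_left (by linarith) hK1
  -- assemble
  have hint : ∀ i : Fin n, Integrable (f i) μ := fun i => (key i).1
  have hmain : ∫ ω, (1 / n : ℝ) * ∑ i : Fin n, f i ω ∂μ
      = (1 / n : ℝ) * ∑ i : Fin n, ∫ ω, f i ω ∂μ := by
    rw [integral_const_mul, integral_finset_sum _ (fun i _ => hint i)]
  have hn0 : (0:ℝ) < n := by exact_mod_cast hn
  calc ∫ ω, (1 / n : ℝ) * ∑ i : Fin n, f i ω ∂μ
      = (1 / n : ℝ) * ∑ i : Fin n, ∫ ω, f i ω ∂μ := hmain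
    _ ≤ (1 / n : ℝ) * ∑ _i : Fin n, (1:ℝ) := by
        apply mul_le_mul_of_nonneg_left (Finset.sum_le_sum (fun i _ => (key i).2))
        positivity
    _ = 1 := by simp [Finset.card_univ]; field_simp
end
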